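/- arXiv:1301.1547 — 12 statements merged into one kernel-verified Lean document; each statement's English description precedes it below -/
import Mathlib

section
/- For all natural numbers n and k with k < n, there exists a bipartite graph with left vertex set {0,1}^n and right vertex set {0,1}^{k+2}, in which every left vertex has degree at most n+1, such that every set of 2^k left vertices has at least 2^k distinct neighbors. -/
open Finset

/-- For all `n k` with `k < n`, there is a bipartite graph with left set
`{0,1}^n`, right set `{0,1}^{k+2}`, left degree at most `n+1`, such that every set of
`2^k` left vertices has at least `2^k` distinct neighbors. -/
theorem stmt0 (n k : ℕ) (hk : k < n) :
    ∃ N : (Fin n → Bool) → Finset (Fin (k + 2) → Bool),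
      (∀ x, (N x).card ≤ n + 1) ∧
      ∀ S : Finset (Fin n → Bool), S.card = 2 ^ k →
        2 ^ k ≤ (S.biUnion N).card := by
  classical
  set K : ℕ := 2 ^ k with hK
  set L := (Fin n → Bool)
  set R := (Fin (k + 2) → Bool)
  set D : ℕ := n + 1 with hD
  set Ω := (L → Fin D → R)
  have hcardL : Fintype.card L = 2 ^ n := by simp [L, Fintype.card_fun]
  have hcardR : Fintype.card R = 2 ^ (k + 2) := by simp [R, Fintype.card_fun]
  have hKpos : 0 < K := Nat.pow_pos (by norm_num)
  have hKle : K ≤ 2 ^ n := Nat.pow_le_pow_right (by norm_num) hk.le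
  suffices h : ∃ f : Ω, ∀ S : Finset L, S.card = K →
      K ≤ (S.biUnion (fun x => image (f x) univ)).card by
    obtain ⟨f, hf⟩ := h
    refine ⟨fun x => image (f x) univ, fun x => ?_, hf⟩
    calc (image (f x) univ).card ≤ (univ : Finset (Fin D)).card := card_image_le
    _ = n + 1 := by simp [hD]
  by_contra hcon
  push_neg at hcon
  set A : Finset L → Finset R → Finset Ω := fun S T =>
    Fintype.piFinset (fun x : L =>
      if x ∈ S then Fintype.piFinset (fun _ : Fin D => T) else univ) with hA
  set pairs : Finset (Finset L × Finset R) :=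
    (univ : Finset L).powersetCard K ×ˢ (univ : Finset R).powersetCard (K - 1) with hpairs
  -- every f is in some A S T
  have hcover : (univ : Finset Ω) ⊆ pairs.biUnion (fun p => A p.1 p.2) := by
    intro f _
    obtain ⟨S, hScard, hSbad⟩ := hcon f
    have hbad' : (S.biUnion (fun x => image (f x) univ)).card ≤ K - 1 :=
      Nat.le_sub_one_of_lt hSbad
    obtain ⟨T, hTsub, hTcard⟩ := Finset.exists_superset_card_eq hbad'
      (by
        rw [hcardR]
        have : K ≤ 2 ^ (k + 2) := by
          rw [hK]; exact Nat.pow_le_pow_right (by norm_num) (by omega)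
        omega)
    refine mem_biUnion.2 ⟨⟨S, T⟩, ?_, ?_⟩
    · simp only [hpairs, mem_product, mem_powersetCard]
      exact ⟨⟨subset_univ _, hScard⟩, ⟨subset_univ _, hTcard⟩⟩
    · refine Fintype.mem_piFinset.2 fun x => ?_
      by_cases hx : x ∈ S
      · simp only [hx, if_true]
        refine Fintype.mem_piFinset.2 fun i => ?_
        apply hTsub
        exact mem_biUnion.2 ⟨x, hx, mem_image.2 ⟨i, mem_univ _, rfl⟩⟩
      · simp [hx]
  -- cardinality of A S T
  set V : ℕ := ((K - 1) ^ D) ^ K * ((2 ^ (k + 2)) ^ D) ^ (2 ^ n - K) with hV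
  have hcardA : ∀ S : Finset L, ∀ T : Finset R, S.card = K → T.card = K - 1 →
      (A S T).card = V := by
    intro S T hS hT
    rw [hA, Fintype.card_piFinset, ← Finset.prod_mul_prod_compl S]
    have h1 : ∀ x ∈ S, ((if x ∈ S then Fintype.piFinset (fun _ : Fin D => T) else univ).card)
        = (K - 1) ^ D := by
      intro x hx
      simp [hx, Fintype.card_piFinset, hT]
    have h2 : ∀ x ∈ Sᶜ, ((if x ∈ S then Fintype.piFinset (fun _ : Fin D => T) else univ).card)
        = (2 ^ (k + 2)) ^ D := by
      intro x hx
      rw [if_neg (mem_compl.1 hx)]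
      simp [← hcardR, Fintype.card_fun]
    rw [Finset.prod_congr rfl h1, Finset.prod_congr rfl h2, Finset.prod_const,
      Finset.prod_const, hS, card_compl, hS, hcardL, hV]
  have hΩcard : Fintype.card Ω = ((2 ^ (k + 2)) ^ D) ^ (2 ^ n) := by
    simp [Ω, Fintype.card_fun, hcardR, hcardL]
  have hbound : Fintype.card Ω ≤ (pairs.biUnion (fun p => A p.1 p.2)).card := by
    rw [← Finset.card_univ]
    exact Finset.card_le_card hcover
  have hpc : pairs.card = (2 ^ n).choose K * (2 ^ (k + 2)).choose (K - 1) := by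
    rw [hpairs, Finset.card_product, Finset.card_powersetCard, Finset.card_powersetCard,
      Finset.card_univ, Finset.card_univ, hcardL, hcardR]
  have hsum : (pairs.biUnion (fun p => A p.1 p.2)).card ≤
      (2 ^ n).choose K * (2 ^ (k + 2)).choose (K - 1) * V := by
    have e2 : ∑ p ∈ pairs, (A p.1 p.2).card = pairs.card * V :=
      Finset.sum_const_nat (fun p hp => by
        simp only [hpairs, mem_product, mem_powersetCard] at hp
        exact hcardA p.1 p.2 hp.1.2 hp.2.2)
    rw [← hpc]
    exact le_trans Finset.card_biUnion_le (le_of_eq e2)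
  -- main arithmetic inequality
  have main : (2 ^ n).choose K * (2 ^ (k + 2)).choose (K - 1) * ((K - 1) ^ D) ^ K
      < ((2 ^ (k + 2)) ^ D) ^ K := by
    rcases Nat.eq_zero_or_pos (K - 1) with h0 | hpos
    · have hz : ((K - 1) ^ D) ^ K = 0 := by
        rw [h0, Nat.zero_pow (by omega), Nat.zero_pow (by omega)]
      rw [hz, Nat.mul_zero]
      positivity
    · have hlt : (K - 1 : ℕ) < 2 ^ k := by omega
      have hc1 : (2 ^ n).choose K ≤ (2 ^ n) ^ K := Nat.choose_le_pow _ _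
      have hc2 : (2 ^ (k + 2)).choose (K - 1) ≤ (2 ^ (k + 2)) ^ K :=
        le_trans (Nat.choose_le_pow _ _)
          (Nat.pow_le_pow_right (by positivity) (by omega))
      have base : 2 ^ n * (2 ^ (k + 2) * (K - 1) ^ D) < (2 ^ (k + 2)) ^ D := by
        calc 2 ^ n * (2 ^ (k + 2) * (K - 1) ^ D)
            < 2 ^ n * (2 ^ (k + 2) * (2 ^ k) ^ D) := by
              gcongr
          _ = 2 ^ (n + ((k + 2) + k * D)) := by
              rw [← pow_mul, ← pow_add, ← pow_add]
          _ ≤ 2 ^ ((k + 2) * D) := by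
              apply Nat.pow_le_pow_right (by norm_num)
              rw [hD]; nlinarith [hk]
          _ = (2 ^ (k + 2)) ^ D := by rw [← pow_mul]
      calc (2 ^ n).choose K * (2 ^ (k + 2)).choose (K - 1) * ((K - 1) ^ D) ^ K
          ≤ (2 ^ n) ^ K * (2 ^ (k + 2)) ^ K * ((K - 1) ^ D) ^ K :=
            Nat.mul_le_mul (Nat.mul_le_mul hc1 hc2) le_rfl
        _ = (2 ^ n * (2 ^ (k + 2) * (K - 1) ^ D)) ^ K := by
            rw [mul_pow, mul_pow, mul_assoc]
        _ < ((2 ^ (k + 2)) ^ D) ^ K :=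
            Nat.pow_lt_pow_left base (by omega)
  have harith : (2 ^ n).choose K * (2 ^ (k + 2)).choose (K - 1) * V <
      ((2 ^ (k + 2)) ^ D) ^ (2 ^ n) := by
    have hsplit : ((2 ^ (k + 2) : ℕ) ^ D) ^ (2 ^ n)
        = ((2 ^ (k + 2)) ^ D) ^ K * ((2 ^ (k + 2)) ^ D) ^ (2 ^ n - K) := by
      rw [← pow_add, Nat.add_sub_cancel' hKle]
    rw [hsplit, hV, ← mul_assoc]
    exact mul_lt_mul_of_pos_right main (by positivity)
  have hfinal := lt_of_le_of_lt (le_trans hbound hsum) harith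
  rw [hΩcard] at hfinal
  exact lt_irrefl _ hfinal
end

section
/- For all natural numbers n and k with k < n, a bipartite graph chosen by independently assigning to each left vertex in {0,1}^n a multiset of n+1 uniformly random neighbors in {0,1}^{k+2} fails to be a (2^k, 2^k)-expander with probability at most (1/2)^{2^k}, which is strictly less than 1. -/
open Classical in
lemma count_E (n k : ℕ) (S : Finset (Fin n → Bool)) (T : Finset (Fin (k+2) → Bool)) :
    (Finset.univ.filter fun g : (Fin n → Bool) → Fin (n+1) → (Fin (k+2) → Bool) =>
        ∀ x ∈ S, ∀ i, g x i ∈ T).card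
      = T.card ^ ((n+1) * S.card) * (2^(k+2)) ^ ((n+1) * (2^n - S.card)) := by
  have h1 : (Finset.univ.filter fun g : (Fin n → Bool) → Fin (n+1) → (Fin (k+2) → Bool) =>
        ∀ x ∈ S, ∀ i, g x i ∈ T)
      = Fintype.piFinset (fun x => if x ∈ S then Fintype.piFinset (fun _ : Fin (n+1) => T)
          else Finset.univ) := by
    ext g
    simp only [Finset.mem_filter, Finset.mem_univ, true_and, Fintype.mem_piFinset]
    constructor
    · intro h x
      by_cases hx : x ∈ S
      · simp [hx, Fintype.mem_piFinset, h x hx]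
      · simp [hx]
    · intro h x hx i
      have := h x
      rw [if_pos hx, Fintype.mem_piFinset] at this
      exact this i
  rw [h1, Fintype.card_piFinset]
  have h2 : ∀ x : Fin n → Bool,
      ((if x ∈ S then Fintype.piFinset (fun _ : Fin (n+1) => T) else Finset.univ).card)
      = if x ∈ S then T.card ^ (n+1) else (2^(k+2)) ^ (n+1) := by
    intro x
    split
    · simp [Fintype.card_piFinset]
    · simp [Finset.card_univ, Fintype.card_fun]
  simp only [h2]
  rw [← Finset.prod_filter_mul_prod_filter_not Finset.univ (· ∈ S)]
  rw [Finset.prod_congr rfl (fun x hx => if_pos (by simpa using (Finset.mem_filter.mp hx).2)),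
      Finset.prod_congr rfl (fun x hx => if_neg (by simpa using (Finset.mem_filter.mp hx).2))]
  rw [Finset.prod_const, Finset.prod_const]
  have hS : (Finset.univ.filter (· ∈ S)).card = S.card := by
    rw [Finset.filter_univ_mem]
  have hSc : (Finset.univ.filter (¬ · ∈ S)).card = 2^n - S.card := by
    have : (Finset.univ.filter (¬ · ∈ S)) = Sᶜ := by
      ext x; simp [Finset.mem_compl]
    rw [this, Finset.card_compl, Fintype.card_fun]
    simp
  rw [hS, hSc, ← pow_mul, ← pow_mul, Nat.mul_comm (n+1), Nat.mul_comm (n+1)]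

open Classical in
/-- a random bipartite graph, obtained by assigning to each left vertex in
`{0,1}^n` a multiset of `n+1` independent uniform neighbors in `{0,1}^{k+2}`, fails to be
a `(2^k, 2^k)`-expander with probability at most `(1/2)^{2^k} < 1`. -/
theorem stmt1 (n k : ℕ) (hk : k < n) :
    (((Finset.univ.filter fun g : (Fin n → Bool) → Fin (n + 1) → (Fin (k + 2) → Bool) =>
          ¬ ∀ S : Finset (Fin n → Bool), S.card = 2 ^ k →
              2 ^ k ≤ (S.biUnion fun x => Finset.image (g x) Finset.univ).card).card : ℝ)
        / (Fintype.card ((Fin n → Bool) → Fin (n + 1) → (Fin (k + 2) → Bool)) : ℝ)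
          ≤ (1 / 2 : ℝ) ^ (2 ^ k)) ∧
    ((1 / 2 : ℝ) ^ (2 ^ k) < 1) := by
  have hm1 : 1 ≤ 2 ^ k := Nat.one_le_two_pow
  constructor
  · set m := 2 ^ k with hm
    set Bad := (Finset.univ.filter fun g : (Fin n → Bool) → Fin (n + 1) → (Fin (k + 2) → Bool) =>
          ¬ ∀ S : Finset (Fin n → Bool), S.card = 2 ^ k →
              2 ^ k ≤ (S.biUnion fun x => Finset.image (g x) Finset.univ).card) with hBad
    have hΩ : Fintype.card ((Fin n → Bool) → Fin (n + 1) → (Fin (k + 2) → Bool))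
        = 2 ^ ((k+2) * ((n+1) * 2^n)) := by
      rw [Fintype.card_fun, Fintype.card_fun, Fintype.card_fun]
      simp [← pow_mul]
      ring_nf
    have hsub : Bad ⊆ (Finset.powersetCard m (Finset.univ : Finset (Fin n → Bool))).biUnion
        (fun S => (Finset.powersetCard (m-1)
            (Finset.univ : Finset (Fin (k+2) → Bool))).biUnion
          (fun T => Finset.univ.filter
            fun g : (Fin n → Bool) → Fin (n + 1) → (Fin (k + 2) → Bool) =>
              ∀ x ∈ S, ∀ i, g x i ∈ T)) := by
      intro g hg
      rw [hBad, Finset.mem_filter] at hg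
      obtain ⟨-, hg⟩ := hg
      push_neg at hg
      obtain ⟨S, hScard, hSlt⟩ := hg
      have hN : (S.biUnion fun x => Finset.image (g x) Finset.univ).card ≤ m - 1 := by omega
      have hle : m - 1 ≤ (Finset.univ : Finset (Fin (k+2) → Bool)).card := by
        rw [Finset.card_univ, Fintype.card_fun]
        simp only [Fintype.card_bool, Fintype.card_fin]
        calc m - 1 ≤ m := Nat.sub_le _ _
          _ ≤ 2 ^ (k+2) := Nat.pow_le_pow_right (by norm_num) (by omega)
      obtain ⟨T, hNT, -, hTcard⟩ :=
        Finset.exists_subsuperset_card_eq (Finset.subset_univ _) hN hle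
      refine Finset.mem_biUnion.mpr ⟨S, ?_, Finset.mem_biUnion.mpr ⟨T, ?_, ?_⟩⟩
      · simp [Finset.mem_powersetCard, hScard, hm]
      · simp [Finset.mem_powersetCard, hTcard]
      · simp only [Finset.mem_filter, Finset.mem_univ, true_and]
        intro x hx i
        exact hNT (Finset.mem_biUnion.mpr ⟨x, hx,
          Finset.mem_image.mpr ⟨i, Finset.mem_univ _, rfl⟩⟩)
    set B := (m-1) ^ ((n+1)*m) * (2^(k+2)) ^ ((n+1)*(2^n - m)) with hBdef
    have h3 : Bad.card ≤ (2^n).choose m * ((2^(k+2)).choose (m-1) * B) := by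
      refine (Finset.card_le_card hsub).trans (Finset.card_biUnion_le.trans ?_)
      have hinner : ∀ S ∈ Finset.powersetCard m (Finset.univ : Finset (Fin n → Bool)),
          ((Finset.powersetCard (m-1) (Finset.univ : Finset (Fin (k+2) → Bool))).biUnion
            (fun T => Finset.univ.filter
              fun g : (Fin n → Bool) → Fin (n + 1) → (Fin (k + 2) → Bool) =>
                ∀ x ∈ S, ∀ i, g x i ∈ T)).card
          ≤ (2^(k+2)).choose (m-1) * B := by
        intro S hS
        rw [Finset.mem_powersetCard] at hS
        refine Finset.card_biUnion_le.trans ?_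
        have : ∀ T ∈ Finset.powersetCard (m-1) (Finset.univ : Finset (Fin (k+2) → Bool)),
            (Finset.univ.filter
              fun g : (Fin n → Bool) → Fin (n + 1) → (Fin (k + 2) → Bool) =>
                ∀ x ∈ S, ∀ i, g x i ∈ T).card = B := by
          intro T hT
          rw [Finset.mem_powersetCard] at hT
          rw [count_E, hS.2, hT.2]
        rw [Finset.sum_congr rfl this, Finset.sum_const, Finset.card_powersetCard,
          Finset.card_univ, Fintype.card_fun, smul_eq_mul]
        simp
      refine (Finset.sum_le_sum hinner).trans ?_
      rw [Finset.sum_const, Finset.card_powersetCard, Finset.card_univ, Fintype.card_fun,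
        smul_eq_mul]
      simp
    have hmle : m ≤ 2 ^ n := Nat.pow_le_pow_right (by norm_num) (by omega)
    have h4 : 2^m * ((2^n).choose m * ((2^(k+2)).choose (m-1) * B))
        ≤ 2 ^ ((k+2) * ((n+1) * 2^n)) := by
      have c1 : (2^n).choose m ≤ 2 ^ (n*m) := by
        calc (2^n).choose m ≤ (2^n)^m := Nat.choose_le_pow _ _
          _ = 2 ^ (n*m) := by rw [← pow_mul]
      have c2 : (2^(k+2)).choose (m-1) ≤ 2 ^ ((k+2)*m) := by
        calc (2^(k+2)).choose (m-1) ≤ (2^(k+2))^(m-1) := Nat.choose_le_pow _ _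
          _ = 2 ^ ((k+2)*(m-1)) := by rw [← pow_mul]
          _ ≤ 2 ^ ((k+2)*m) := Nat.pow_le_pow_right (by norm_num)
              (Nat.mul_le_mul_left _ (Nat.sub_le _ _))
      have c3 : B ≤ 2 ^ (k*((n+1)*m)) * 2 ^ ((k+2)*((n+1)*(2^n - m))) := by
        rw [hBdef]
        refine Nat.mul_le_mul ?_ ?_
        · calc (m-1) ^ ((n+1)*m) ≤ (2^k) ^ ((n+1)*m) :=
              Nat.pow_le_pow_left (by omega) _
            _ = 2 ^ (k*((n+1)*m)) := by rw [← pow_mul]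
        · rw [← pow_mul]
      calc 2^m * ((2^n).choose m * ((2^(k+2)).choose (m-1) * B))
          ≤ 2^m * (2^(n*m) * (2^((k+2)*m) *
              (2 ^ (k*((n+1)*m)) * 2 ^ ((k+2)*((n+1)*(2^n - m)))))) := by
            exact Nat.mul_le_mul_left _ (Nat.mul_le_mul c1 (Nat.mul_le_mul c2 c3))
        _ = 2 ^ (m + (n*m + ((k+2)*m + (k*((n+1)*m) + (k+2)*((n+1)*(2^n - m)))))) := by
            simp only [pow_add]
        _ ≤ 2 ^ ((k+2) * ((n+1) * 2^n)) := by
            refine Nat.pow_le_pow_right (by norm_num) ?_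
            have hsplit : 2^n = m + (2^n - m) := by omega
            set d := 2^n - m with hd
            rw [hsplit]
            have hkn : k + 1 ≤ n := hk
            nlinarith [Nat.zero_le m, Nat.zero_le d, Nat.zero_le (k*n)]
    have hΩpos : (0:ℝ) < (Fintype.card ((Fin n → Bool) → Fin (n + 1) →
        (Fin (k + 2) → Bool)) : ℝ) := by
      exact_mod_cast Fintype.card_pos
    have hnat : 2^m * Bad.card
        ≤ Fintype.card ((Fin n → Bool) → Fin (n + 1) → (Fin (k + 2) → Bool)) := by
      rw [hΩ]
      exact le_trans (Nat.mul_le_mul_left _ h3) h4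
    rw [div_le_iff₀ hΩpos]
    have hreal : (2:ℝ)^m * (Bad.card : ℝ)
        ≤ (Fintype.card ((Fin n → Bool) → Fin (n + 1) → (Fin (k + 2) → Bool)) : ℝ) := by
      exact_mod_cast hnat
    have h2m : (0:ℝ) < 2^m := by positivity
    calc (Bad.card : ℝ) = ((2:ℝ)^m * Bad.card) / 2^m := by field_simp
      _ ≤ (Fintype.card ((Fin n → Bool) → Fin (n + 1) → (Fin (k + 2) → Bool)) : ℝ) / 2^m :=
          by gcongr
      _ = (1/2:ℝ)^m * (Fintype.card ((Fin n → Bool) → Fin (n + 1) →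
            (Fin (k + 2) → Bool)) : ℝ) := by
          rw [div_pow, one_pow]
          ring
  · refine pow_lt_one₀ (by norm_num) (by norm_num) ?_
    positivity
end

section
/- For all natural numbers n and k with k < n, there exists a bipartite graph with left set {0,1}^n, right set {0,1}^{k+2}, and left degree at most n+1, which is simultaneously a (t, t)-expander for every t ≤ 2^k. -/
open Finset

private lemma geo_sum (m : ℕ) : ∑ t ∈ Icc 1 m, 2 ^ (m - t) = 2 ^ m - 1 := by
  induction m with
  | zero => simp
  | succ m ih =>
    rw [Finset.sum_Icc_succ_top (by omega)]
    have h1 : ∑ t ∈ Icc 1 m, 2 ^ (m + 1 - t) = 2 * ∑ t ∈ Icc 1 m, 2 ^ (m - t) := by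
      rw [Finset.mul_sum]
      refine Finset.sum_congr rfl fun t ht => ?_
      have := (Finset.mem_Icc.1 ht).2
      rw [← pow_succ']
      congr 1
      omega
    rw [h1, ih]
    have h2 : m + 1 - (m + 1) = 0 := by omega
    have h3 : 1 ≤ 2 ^ m := Nat.one_le_two_pow
    rw [h2, pow_zero, pow_succ]
    omega

/-- For all `n k` with `k < n` there is a bipartite graph with left set
`{0,1}^n`, right set `{0,1}^{k+2}` and left degree at most `n+1` which is simultaneously a
`(t,t)`-expander for every `t ≤ 2^k`. -/
theorem stmt2 (n k : ℕ) (hk : k < n) :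
    ∃ N : (Fin n → Bool) → Finset (Fin (k + 2) → Bool),
      (∀ x, (N x).card ≤ n + 1) ∧
      ∀ t ≤ 2 ^ k, ∀ S : Finset (Fin n → Bool), S.card = t →
        t ≤ (S.biUnion N).card := by
  classical
  suffices h : ∃ f : (Fin n → Bool) → Fin (n + 1) → (Fin (k + 2) → Bool),
      ∀ t ≤ 2 ^ k, ∀ S : Finset (Fin n → Bool), S.card = t →
        t ≤ (S.biUnion fun x => image (f x) univ).card by
    obtain ⟨f, hf⟩ := h
    refine ⟨fun x => image (f x) univ, fun x => ?_, hf⟩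
    calc (image (f x) univ).card ≤ (univ : Finset (Fin (n + 1))).card := card_image_le
      _ = n + 1 := by simp
  by_contra hcon
  push_neg at hcon
  set Ω := (Fin n → Bool) → Fin (n + 1) → (Fin (k + 2) → Bool) with hΩ
  set BadT : ℕ → Finset Ω := fun t => univ.filter
    (fun f => ∃ S : Finset (Fin n → Bool), S.card = t ∧
      (S.biUnion fun x => image (f x) univ).card < t) with hBadTdef
  have hcover : (univ : Finset Ω) ⊆ (Icc 1 (2 ^ k)).biUnion BadT := by
    intro f _
    obtain ⟨t, ht, S, hS, hlt⟩ := hcon f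
    have ht1 : 1 ≤ t := by omega
    exact mem_biUnion.2 ⟨t, mem_Icc.2 ⟨ht1, ht⟩, mem_filter.2 ⟨mem_univ _, S, hS, hlt⟩⟩
  have hcardΩ : Fintype.card Ω = 2 ^ ((k + 2) * (n + 1) * 2 ^ n) := by
    show Fintype.card ((Fin n → Bool) → Fin (n + 1) → Fin (k + 2) → Bool) = _
    simp [Fintype.card_fun]
    rw [← pow_mul, ← pow_mul, mul_assoc]
  have key : ∀ t ∈ Icc 1 (2 ^ k), (BadT t).card * 2 ^ t ≤ Fintype.card Ω := by
    intro t ht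
    obtain ⟨ht1, ht2⟩ := mem_Icc.1 ht
    set AF : Finset (Fin n → Bool) → Finset (Fin (k + 2) → Bool) → Finset Ω :=
      fun S W => Fintype.piFinset
        (fun x => if x ∈ S then Fintype.piFinset (fun _ : Fin (n + 1) => W) else univ) with hAF
    have hsub : BadT t ⊆ (powersetCard t (univ : Finset (Fin n → Bool))).biUnion
        (fun S => (powersetCard (t - 1) (univ : Finset (Fin (k + 2) → Bool))).biUnion
          (fun W => AF S W)) := by
      intro f hf
      obtain ⟨-, S, hS, hlt⟩ := mem_filter.1 hf
      have hle : (S.biUnion fun x => image (f x) univ).card ≤ t - 1 := by omega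
      have htR : t - 1 ≤ Fintype.card (Fin (k + 2) → Bool) := by
        have : Fintype.card (Fin (k + 2) → Bool) = 2 ^ (k + 2) := by simp
        have h2 : (2:ℕ) ^ k ≤ 2 ^ (k + 2) := Nat.pow_le_pow_right (by norm_num) (by omega)
        omega
      obtain ⟨W, hWsub, hWcard⟩ := Finset.exists_superset_card_eq hle htR
      refine mem_biUnion.2 ⟨S, mem_powersetCard_univ.2 hS, mem_biUnion.2
        ⟨W, mem_powersetCard_univ.2 hWcard, ?_⟩⟩
      rw [hAF]
      refine Fintype.mem_piFinset.2 fun x => ?_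
      by_cases hx : x ∈ S
      · simp only [hx, if_true]
        refine Fintype.mem_piFinset.2 fun j => ?_
        exact hWsub (mem_biUnion.2 ⟨x, hx, mem_image.2 ⟨j, mem_univ _, rfl⟩⟩)
      · simp [hx]
    have hcardAF : ∀ S : Finset (Fin n → Bool), ∀ W : Finset (Fin (k + 2) → Bool),
        S.card = t → W.card = t - 1 →
        (AF S W).card = ((t - 1) ^ (n + 1)) ^ t * (2 ^ ((k + 2) * (n + 1))) ^ (2 ^ n - t) := by
      intro S W hS hW
      rw [hAF]
      rw [Fintype.card_piFinset]
      have : ∀ x : Fin n → Bool,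
          ((if x ∈ S then Fintype.piFinset (fun _ : Fin (n + 1) => W) else univ)).card
          = if x ∈ S then (t - 1) ^ (n + 1) else 2 ^ ((k + 2) * (n + 1)) := by
        intro x
        by_cases hx : x ∈ S
        · simp [hx, Fintype.card_piFinset, hW]
        · simp [hx, Fintype.card_fun, ← pow_mul]
      rw [Finset.prod_congr rfl (fun x _ => this x)]
      rw [Finset.prod_ite]
      simp only [Finset.prod_const]
      congr 1
      · congr 1
        simpa using hS
      · congr 1
        have h1 : Finset.filter (fun x => ¬ x ∈ S) univ = Sᶜ := by
          ext x; simp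
        rw [h1, Finset.card_compl, hS]
        simp
    -- combine
    have hb1 : (BadT t).card ≤
        2 ^ (n * t) * (2 ^ ((k + 2) * t) * (((t - 1) ^ (n + 1)) ^ t *
          (2 ^ ((k + 2) * (n + 1))) ^ (2 ^ n - t))) := by
      calc (BadT t).card ≤ _ := Finset.card_le_card hsub
        _ ≤ ∑ S ∈ powersetCard t (univ : Finset (Fin n → Bool)),
              ((powersetCard (t - 1) (univ : Finset (Fin (k + 2) → Bool))).biUnion
                (fun W => AF S W)).card := Finset.card_biUnion_le
        _ ≤ ∑ S ∈ powersetCard t (univ : Finset (Fin n → Bool)),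
              ∑ W ∈ powersetCard (t - 1) (univ : Finset (Fin (k + 2) → Bool)),
                (AF S W).card := Finset.sum_le_sum fun S _ => Finset.card_biUnion_le
        _ = ∑ S ∈ powersetCard t (univ : Finset (Fin n → Bool)),
              ∑ W ∈ powersetCard (t - 1) (univ : Finset (Fin (k + 2) → Bool)),
                ((t - 1) ^ (n + 1)) ^ t * (2 ^ ((k + 2) * (n + 1))) ^ (2 ^ n - t) := by
            refine Finset.sum_congr rfl fun S hS => Finset.sum_congr rfl fun W hW => ?_
            exact hcardAF S W (mem_powersetCard_univ.1 hS) (mem_powersetCard_univ.1 hW)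
        _ = (2 ^ n).choose t * ((2 ^ (k + 2)).choose (t - 1) *
              (((t - 1) ^ (n + 1)) ^ t * (2 ^ ((k + 2) * (n + 1))) ^ (2 ^ n - t))) := by
            simp [Finset.sum_const, card_powersetCard, mul_assoc]
        _ ≤ _ := by
            have c1 : (2 ^ n).choose t ≤ 2 ^ (n * t) := by
              calc (2 ^ n).choose t ≤ (2 ^ n) ^ t := Nat.choose_le_pow _ _
                _ = 2 ^ (n * t) := by rw [← pow_mul]
            have c2 : (2 ^ (k + 2)).choose (t - 1) ≤ 2 ^ ((k + 2) * t) := by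
              calc (2 ^ (k + 2)).choose (t - 1) ≤ (2 ^ (k + 2)) ^ (t - 1) :=
                    Nat.choose_le_pow _ _
                _ ≤ (2 ^ (k + 2)) ^ t := Nat.pow_le_pow_right (Nat.pow_pos (by norm_num)) (by omega)
                _ = 2 ^ ((k + 2) * t) := by rw [← pow_mul]
            exact Nat.mul_le_mul c1 (Nat.mul_le_mul c2 le_rfl)
    have hb2 : ((t - 1) ^ (n + 1)) ^ t ≤ 2 ^ (k * (n + 1) * t) := by
      have : t - 1 ≤ 2 ^ k := by omega
      calc ((t - 1) ^ (n + 1)) ^ t ≤ ((2 ^ k) ^ (n + 1)) ^ t :=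
            Nat.pow_le_pow_left (Nat.pow_le_pow_left this _) _
        _ = 2 ^ (k * (n + 1) * t) := by rw [← pow_mul, ← pow_mul, mul_assoc]
    have ht2n : t ≤ 2 ^ n := le_trans ht2 (Nat.pow_le_pow_right (by norm_num) (by omega))
    calc (BadT t).card * 2 ^ t
        ≤ (2 ^ (n * t) * (2 ^ ((k + 2) * t) * (2 ^ (k * (n + 1) * t) *
            (2 ^ ((k + 2) * (n + 1))) ^ (2 ^ n - t)))) * 2 ^ t :=
          Nat.mul_le_mul_right _ (le_trans hb1 (Nat.mul_le_mul_left _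
            (Nat.mul_le_mul_left _ (Nat.mul_le_mul_right _ hb2))))
      _ = 2 ^ (n * t + (k + 2) * t + k * (n + 1) * t + (k + 2) * (n + 1) * (2 ^ n - t) + t) := by
          rw [← pow_mul, ← pow_add, ← pow_add, ← pow_add, ← pow_add]
          congr 1
          ring
      _ ≤ 2 ^ ((k + 2) * (n + 1) * 2 ^ n) := by
          apply Nat.pow_le_pow_right (by norm_num)
          have hsplit : (k + 2) * (n + 1) * 2 ^ n
              = (k + 2) * (n + 1) * t + (k + 2) * (n + 1) * (2 ^ n - t) := by
            rw [← Nat.mul_add]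
            congr 1
            omega
          rw [hsplit]
          have hcoeff : n * t + (k + 2) * t + k * (n + 1) * t + t ≤ (k + 2) * (n + 1) * t := by
            have : n + (k + 2) + k * (n + 1) + 1 ≤ (k + 2) * (n + 1) := by nlinarith
            calc n * t + (k + 2) * t + k * (n + 1) * t + t
                = (n + (k + 2) + k * (n + 1) + 1) * t := by ring
              _ ≤ (k + 2) * (n + 1) * t := Nat.mul_le_mul_right _ this
          omega
      _ = Fintype.card Ω := hcardΩ.symm
  -- conclude
  have h1 : Fintype.card Ω ≤ ∑ t ∈ Icc 1 (2 ^ k), (BadT t).card := by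
    calc Fintype.card Ω = (univ : Finset Ω).card := card_univ.symm
      _ ≤ ((Icc 1 (2 ^ k)).biUnion BadT).card := card_le_card hcover
      _ ≤ _ := card_biUnion_le
  have h2 : (∑ t ∈ Icc 1 (2 ^ k), (BadT t).card) * 2 ^ (2 ^ k)
      < Fintype.card Ω * 2 ^ (2 ^ k) := by
    have hΩpos : 0 < Fintype.card Ω := Fintype.card_pos
    calc (∑ t ∈ Icc 1 (2 ^ k), (BadT t).card) * 2 ^ (2 ^ k)
        = ∑ t ∈ Icc 1 (2 ^ k), (BadT t).card * 2 ^ t * 2 ^ (2 ^ k - t) := by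
          rw [Finset.sum_mul]
          refine Finset.sum_congr rfl fun t ht => ?_
          rw [mul_assoc, ← pow_add]
          congr 2
          have := (mem_Icc.1 ht).2
          omega
      _ ≤ ∑ t ∈ Icc 1 (2 ^ k), Fintype.card Ω * 2 ^ (2 ^ k - t) :=
          Finset.sum_le_sum fun t ht => Nat.mul_le_mul_right _ (key t ht)
      _ = Fintype.card Ω * ∑ t ∈ Icc 1 (2 ^ k), 2 ^ (2 ^ k - t) := by rw [Finset.mul_sum]
      _ = Fintype.card Ω * (2 ^ (2 ^ k) - 1) := by rw [geo_sum]
      _ < Fintype.card Ω * 2 ^ (2 ^ k) := by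
          refine mul_lt_mul_of_pos_left ?_ hΩpos
          have : 1 ≤ 2 ^ (2 ^ k) := Nat.one_le_two_pow
          omega
  have := Nat.mul_le_mul_right (2 ^ (2 ^ k)) h1
  omega
end

section
/- Every bipartite graph that is a (2^{k-ℓ}, 2^k - 2^{k-ℓ})-expander admits an on-line matching strategy serving up to 2^k requests while rejecting at most 2^{k-ℓ} of them. Specifically, the greedy strategy (match each arriving left vertex to any unused neighbor if one exists, otherwise reject) rejects at most 2^{k-ℓ} vertices out of any sequence of at most 2^k distinct left vertices. -/
/-- Number of rejections of the greedy on-line matching strategy which matches each arriving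
left vertex to an arbitrary (choice-function chosen) yet-unused neighbor, if one exists, and
rejects it otherwise.  The second argument is the set of already used right vertices. -/
noncomputable def greedyRejects {L R : Type*} [DecidableEq R]
    (N : L → Finset R) : List L → Finset R → ℕ
  | [], _ => 0
  | x :: xs, used =>
    if h : (N x \ used).Nonempty then
      greedyRejects N xs (insert h.choose used)
    else
      greedyRejects N xs used + 1

private lemma greedy_aux {L R : Type*} [DecidableEq L] [DecidableEq R]
    (N : L → Finset R) (k ℓ : ℕ) (hℓ : ℓ ≤ k)
    (hexp : ∀ S : Finset L, S.card = 2 ^ (k - ℓ) →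
        2 ^ k - 2 ^ (k - ℓ) ≤ (S.biUnion N).card) :
    ∀ (xs : List L), xs.Nodup → ∀ (used : Finset R) (Rej : Finset L),
      (∀ s ∈ Rej, N s ⊆ used) →
      used.card + Rej.card + xs.length ≤ 2 ^ k →
      Rej.card ≤ 2 ^ (k - ℓ) →
      (∀ y ∈ xs, y ∉ Rej) →
      greedyRejects N xs used + Rej.card ≤ 2 ^ (k - ℓ) := by
  intro xs
  induction xs with
  | nil =>
      intro _ used Rej _ _ hR _
      simpa [greedyRejects] using hR
  | cons x xs ih =>
      intro hnd used Rej hNsub hcard hR hdisj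
      rw [List.nodup_cons] at hnd
      by_cases h : (N x \ used).Nonempty
      · rw [greedyRejects, dif_pos h]
        have hch : h.choose ∈ N x \ used := h.choose_spec
        have hnot : h.choose ∉ used := (Finset.mem_sdiff.mp hch).2
        refine ih hnd.2 (insert h.choose used) Rej
          (fun s hs => (hNsub s hs).trans (Finset.subset_insert _ _)) ?_ hR
          (fun y hy => hdisj y (List.mem_cons_of_mem _ hy))
        rw [Finset.card_insert_of_notMem hnot]
        simpa [List.length_cons, Nat.add_assoc, Nat.add_comm, Nat.add_left_comm] using hcard
      · rw [greedyRejects, dif_neg h]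
        -- x is rejected: N x ⊆ used
        have hNx : N x ⊆ used := by
          intro r hr
          by_contra hru
          exact h ⟨r, Finset.mem_sdiff.mpr ⟨hr, hru⟩⟩
        have hxR : x ∉ Rej := hdisj x (List.mem_cons_self)
        have hcardR' : (insert x Rej).card = Rej.card + 1 :=
          Finset.card_insert_of_notMem hxR
        -- new rejected-set card bound
        have hRlt : Rej.card < 2 ^ (k - ℓ) := by
          rcases lt_or_eq_of_le hR with hlt | heq
          · exact hlt
          · exfalso
            have hsub : Rej.biUnion N ⊆ used :=
              Finset.biUnion_subset.mpr hNsub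
            have h1 : 2 ^ k - 2 ^ (k - ℓ) ≤ used.card :=
              le_trans (hexp Rej heq) (Finset.card_le_card hsub)
            have h2 : 2 ^ (k - ℓ) ≤ 2 ^ k := Nat.pow_le_pow_right (by norm_num) (Nat.sub_le _ _)
            have : 2 ^ k ≤ used.card + Rej.card := by omega
            have : used.card + Rej.card + (x :: xs).length ≤ 2 ^ k := hcard
            simp [List.length_cons] at this
            omega
        have := ih hnd.2 used (insert x Rej)
          (fun s hs => by
            rcases Finset.mem_insert.mp hs with rfl | hs
            · exact hNx
            · exact hNsub s hs)
          (by rw [hcardR']; simpa [List.length_cons, Nat.add_assoc, Nat.add_comm,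
                Nat.add_left_comm] using hcard)
          (by rw [hcardR']; omega)
          (fun y hy => by
            rw [Finset.mem_insert]
            push_neg
            exact ⟨fun hyx => hnd.1 (hyx ▸ hy), hdisj y (List.mem_cons_of_mem _ hy)⟩)
        rw [hcardR'] at this
        omega

/-- every `(2^{k-ℓ}, 2^k - 2^{k-ℓ})`-expander admits on-line matching of up to
`2^k` requests (distinct left vertices) with at most `2^{k-ℓ}` rejections; indeed the greedy
strategy rejects at most `2^{k-ℓ}` of any sequence of at most `2^k` distinct left vertices. -/
theorem stmt3 {L R : Type*} [DecidableEq R]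
    (N : L → Finset R) (k ℓ : ℕ) (hℓ : ℓ ≤ k)
    (hexp : ∀ S : Finset L, S.card = 2 ^ (k - ℓ) →
        2 ^ k - 2 ^ (k - ℓ) ≤ (S.biUnion N).card)
    (xs : List L) (hnd : xs.Nodup) (hlen : xs.length ≤ 2 ^ k) :
    greedyRejects N xs ∅ ≤ 2 ^ (k - ℓ) := by
  classical
  have := greedy_aux N k ℓ hℓ hexp xs hnd ∅ ∅ (by simp) (by simpa using hlen)
    (by simp) (by simp)
  simpa using this
end

section
/- Suppose a bipartite graph has 2^ℓ left vertices and 2^{k+c} right vertices and is a (2^k, 2^{k-1}+1)-expander. Then some left vertex has degree strictly greater than D = min(2^{k-2}, (ℓ-k)/(c+2)). -/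
open Finset

/-- Number of `m`-subsets of `s` containing a fixed `A ⊆ s`. -/
lemma card_supersets {α : Type*} [DecidableEq α] (s A : Finset α) (hA : A ⊆ s) (m : ℕ)
    (hm : A.card ≤ m) :
    ((s.powersetCard m).filter (fun T => A ⊆ T)).card
      = (s.card - A.card).choose (m - A.card) := by
  rw [← Finset.card_sdiff_of_subset hA, ← Finset.card_powersetCard (m - A.card) (s \ A)]
  apply Finset.card_bij' (fun T _ => T \ A) (fun B _ => A ∪ B)
  · intro T hT
    simp only [mem_filter, mem_powersetCard] at hT
    simp only [mem_powersetCard]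
    exact ⟨sdiff_subset_sdiff hT.1.1 le_rfl, by rw [card_sdiff_of_subset hT.2, hT.1.2]⟩
  · intro B hB
    simp only [mem_powersetCard] at hB
    have hBs : B ⊆ s \ A := hB.1
    have hdisj : Disjoint A B := by
      intro u huA huB
      intro a ha
      have h1 := huA ha
      have h2 := huB ha
      have := (Finset.mem_sdiff.1 (hBs h2)).2
      exact absurd h1 this
    simp only [mem_filter, mem_powersetCard]
    refine ⟨⟨union_subset hA (hBs.trans (sdiff_subset)), ?_⟩, subset_union_left⟩
    rw [card_union_of_disjoint hdisj, hB.2]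
    omega
  · intro T hT
    simp only [mem_filter, mem_powersetCard] at hT
    exact union_sdiff_of_subset hT.2
  · intro B hB
    simp only [mem_powersetCard] at hB
    apply union_sdiff_cancel_left
    intro u huA huB
    intro a ha
    exact absurd (huA ha) (Finset.mem_sdiff.1 (hB.1 (huB ha))).2

/-- Binomial coefficient ratio bound. -/
lemma choose_le_pow_mul_choose (B : ℕ) :
    ∀ d n m : ℕ, d ≤ m → m ≤ n → n ≤ B * (m - d + 1) →
      n.choose m ≤ B ^ d * (n - d).choose (m - d) := by
  intro d
  induction d with
  | zero => intro n m _ _ _; simp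
  | succ d ih =>
    intro n m hdm hmn hB
    have hm1 : 1 ≤ m := by omega
    have hn1 : 1 ≤ n := by omega
    have hstep : n.choose m ≤ B * (n - 1).choose (m - 1) := by
      have key : n.choose m * m = n * (n - 1).choose (m - 1) := by
        have := Nat.add_one_mul_choose_eq (n - 1) (m - 1)
        rw [Nat.sub_add_cancel hn1, Nat.sub_add_cancel hm1] at this
        exact this.symm
      have hnBm : n ≤ B * m := by
        have : m - (d + 1) + 1 ≤ m := by omega
        calc n ≤ B * (m - (d + 1) + 1) := hB
          _ ≤ B * m := Nat.mul_le_mul_left _ this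
      have : n.choose m * m ≤ (B * (n - 1).choose (m - 1)) * m := by
        calc n.choose m * m = n * (n - 1).choose (m - 1) := key
          _ ≤ (B * m) * (n - 1).choose (m - 1) := Nat.mul_le_mul_right _ hnBm
          _ = (B * (n - 1).choose (m - 1)) * m := by ring
      exact Nat.le_of_mul_le_mul_right this hm1
    have hrec := ih (n - 1) (m - 1) (by omega) (by omega) (by
      have h1 : m - 1 - d + 1 = m - (d + 1) + 1 := by omega
      rw [h1]; omega)
    have h2 : n - 1 - d = n - (d + 1) := by omega
    have h3 : m - 1 - d = m - (d + 1) := by omega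
    rw [h2, h3] at hrec
    calc n.choose m ≤ B * (n - 1).choose (m - 1) := hstep
      _ ≤ B * (B ^ d * (n - (d + 1)).choose (m - (d + 1))) := Nat.mul_le_mul_left _ hrec
      _ = B ^ (d + 1) * (n - (d + 1)).choose (m - (d + 1)) := by ring

/-- a bipartite graph with `2^ℓ` left vertices and `2^{k+c}` right vertices which
is a `(2^k, 2^{k-1}+1)`-expander has a left vertex of degree strictly greater than
`min (2^{k-2}) ((ℓ-k)/(c+2))`. -/
theorem stmt6 {L R : Type*} [Fintype L] [Fintype R] [DecidableEq R]
    (k ℓ c : ℕ) (hkl : k ≤ ℓ)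
    (hL : Fintype.card L = 2 ^ ℓ) (hR : Fintype.card R = 2 ^ (k + c))
    (N : L → Finset R)
    (hexp : ∀ S : Finset L, S.card = 2 ^ k →
        2 ^ (k - 1) + 1 ≤ (S.biUnion N).card) :
    ∃ x : L, min (2 ^ (k - 2)) ((ℓ - k) / (c + 2)) < (N x).card := by
  classical
  by_contra hcon
  push_neg at hcon
  set D : ℕ := min (2 ^ (k - 2)) ((ℓ - k) / (c + 2)) with hD
  set m : ℕ := 2 ^ (k - 1) with hm
  set n : ℕ := 2 ^ (k + c) with hn
  set B : ℕ := 2 ^ (c + 2) with hB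
  have hDk : D ≤ 2 ^ (k - 2) := min_le_left _ _
  have hDl : D * (c + 2) ≤ ℓ - k :=
    (Nat.le_div_iff_mul_le (by omega)).1 (min_le_right _ _)
  have hmn : m ≤ n := Nat.pow_le_pow_right (by omega) (by omega)
  -- 2^(k-2) + D ≤ m + 1
  have h1 : 2 ^ (k - 2) + D ≤ m + 1 := by
    rcases le_or_gt k 1 with hk | hk
    · have e1 : (2:ℕ) ^ (k - 2) = 1 := by interval_cases k <;> simp
      have e2 : m = 1 := by rw [hm]; interval_cases k <;> simp
      omega
    · obtain ⟨j, rfl⟩ : ∃ j, k = j + 2 := ⟨k - 2, by omega⟩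
      have e1 : (2:ℕ) ^ (j + 2 - 2) = 2 ^ j := by norm_num
      have e2 : m = 2 * 2 ^ j := by
        rw [hm, show j + 2 - 1 = j + 1 by omega, pow_succ]; ring
      omega
  have hDm : D ≤ m := by
    have : (2:ℕ) ^ (k - 2) ≤ 2 ^ (k - 1) := Nat.pow_le_pow_right (by omega) (by omega)
    omega
  have hcond : n ≤ B * (m - D + 1) := by
    have e1 : n ≤ B * 2 ^ (k - 2) := by
      rw [hn, hB, ← pow_add]
      exact Nat.pow_le_pow_right (by omega) (by omega)
    have e2 : (2:ℕ) ^ (k - 2) ≤ m - D + 1 := by omega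
    calc n ≤ B * 2 ^ (k - 2) := e1
      _ ≤ B * (m - D + 1) := Nat.mul_le_mul_left _ e2
  set 𝒯 : Finset (Finset R) := (univ : Finset R).powersetCard m with h𝒯
  have hcard𝒯 : 𝒯.card = n.choose m := by
    rw [h𝒯, card_powersetCard, card_univ, hR]
  -- double counting
  have hdc : ∑ x : L, (𝒯.filter (fun T => N x ⊆ T)).card
      = ∑ T ∈ 𝒯, ((univ : Finset L).filter (fun x => N x ⊆ T)).card := by
    simp_rw [Finset.card_filter]
    exact Finset.sum_comm
  -- per-vertex lower bound
  have hper : ∀ x : L, n.choose m ≤ B ^ D * (𝒯.filter (fun T => N x ⊆ T)).card := by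
    intro x
    have hd : (N x).card ≤ D := hcon x
    have hcount : (𝒯.filter (fun T => N x ⊆ T)).card
        = (n - (N x).card).choose (m - (N x).card) := by
      rw [h𝒯, card_supersets _ _ (subset_univ _) m (hd.trans hDm), card_univ, hR]
    rw [hcount]
    have := choose_le_pow_mul_choose B (N x).card n m (hd.trans hDm) hmn
      (by
        have : m - D ≤ m - (N x).card := by omega
        calc n ≤ B * (m - D + 1) := hcond
          _ ≤ B * (m - (N x).card + 1) := Nat.mul_le_mul_left _ (by omega))
    calc n.choose m ≤ B ^ (N x).card * (n - (N x).card).choose (m - (N x).card) := this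
      _ ≤ B ^ D * (n - (N x).card).choose (m - (N x).card) :=
          Nat.mul_le_mul_right _ (Nat.pow_le_pow_right (by rw [hB]; exact Nat.one_le_two_pow) hd)
  -- total lower bound
  have htot : 2 ^ ℓ * n.choose m ≤ B ^ D * ∑ T ∈ 𝒯, ((univ : Finset L).filter (fun x => N x ⊆ T)).card := by
    rw [← hdc, Finset.mul_sum]
    calc 2 ^ ℓ * n.choose m = ∑ _x : L, n.choose m := by
          rw [Finset.sum_const, card_univ, hL, smul_eq_mul]
      _ ≤ ∑ x : L, B ^ D * (𝒯.filter (fun T => N x ⊆ T)).card :=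
          Finset.sum_le_sum fun x _ => hper x
  -- find a heavy T
  have hex : ∃ T ∈ 𝒯, 2 ^ k ≤ ((univ : Finset L).filter (fun x => N x ⊆ T)).card := by
    by_contra hno
    push_neg at hno
    have hub : ∑ T ∈ 𝒯, ((univ : Finset L).filter (fun x => N x ⊆ T)).card
        ≤ 𝒯.card * (2 ^ k - 1) := by
      calc ∑ T ∈ 𝒯, ((univ : Finset L).filter (fun x => N x ⊆ T)).card
          ≤ ∑ _T ∈ 𝒯, (2 ^ k - 1) := Finset.sum_le_sum fun T hT => by
            have := hno T hT; omega
        _ = 𝒯.card * (2 ^ k - 1) := by rw [Finset.sum_const, smul_eq_mul]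
    have hchain : 2 ^ ℓ * n.choose m ≤ B ^ D * ((2 ^ k - 1) * n.choose m) := by
      calc 2 ^ ℓ * n.choose m ≤ B ^ D * ∑ T ∈ 𝒯, ((univ : Finset L).filter (fun x => N x ⊆ T)).card := htot
        _ ≤ B ^ D * (𝒯.card * (2 ^ k - 1)) := Nat.mul_le_mul_left _ hub
        _ = B ^ D * ((2 ^ k - 1) * n.choose m) := by rw [hcard𝒯]; ring
    have hCpos : 0 < n.choose m := Nat.choose_pos hmn
    have hfin : 2 ^ ℓ ≤ B ^ D * (2 ^ k - 1) := by
      have := hchain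
      rw [← Nat.mul_assoc] at this
      exact Nat.le_of_mul_le_mul_right this hCpos
    have hBk : B ^ D * 2 ^ k ≤ 2 ^ ℓ := by
      rw [hB, ← pow_mul, ← pow_add]
      refine Nat.pow_le_pow_right (by omega) ?_
      have h := hDl
      rw [Nat.mul_comm] at h
      omega
    have hk1 : (1:ℕ) ≤ 2 ^ k := Nat.one_le_two_pow
    have hBD1 : (1:ℕ) ≤ B ^ D := Nat.one_le_pow _ _ (by positivity)
    have heq : B ^ D * 2 ^ k = B ^ D * (2 ^ k - 1) + B ^ D := by
      have h2 : (2:ℕ) ^ k = (2 ^ k - 1) + 1 := by omega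
      rw [h2, Nat.mul_add, Nat.mul_one, Nat.add_sub_cancel]
    have hfinal : B ^ D * (2 ^ k - 1) + B ^ D ≤ B ^ D * (2 ^ k - 1) := by
      calc B ^ D * (2 ^ k - 1) + B ^ D = B ^ D * 2 ^ k := heq.symm
        _ ≤ 2 ^ ℓ := hBk
        _ ≤ B ^ D * (2 ^ k - 1) := hfin
    omega
  obtain ⟨T, hT𝒯, hfT⟩ := hex
  obtain ⟨S, hSsub, hScard⟩ := Finset.exists_subset_card_eq hfT
  have hNS : S.biUnion N ⊆ T := by
    intro r hr
    obtain ⟨x, hxS, hxr⟩ := Finset.mem_biUnion.1 hr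
    exact (Finset.mem_filter.1 (hSsub hxS)).2 hxr
  have hTcard : T.card = m := (Finset.mem_powersetCard.1 hT𝒯).2
  have hx1 := hexp S hScard
  have hx2 := (Finset.card_le_card hNS).trans_eq hTcard
  omega
end

section
/- Let G be a bipartite graph with 2^{k+c} right vertices that is a (2^k, 2^{k-1}+1)-expander, and suppose G has more than 2^ℓ left vertices. Then all but fewer than 2^ℓ of the left vertices have degree strictly greater than min(2^{k-2}, (ℓ-k)/(c+2)). -/
/-- Arithmetic core: iterated ratio bound on binomial coefficients. -/
lemma choose_le_aux (M n t : ℕ) (ht : t ≤ n) :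
    ∀ e, e ≤ t → (∀ i, i < e → n - i ≤ (t - i) * M) →
      Nat.choose n t ≤ Nat.choose (n - e) (t - e) * M ^ e := by
  intro e
  induction e with
  | zero => simp
  | succ e ih =>
    intro he hcond
    have h1 : Nat.choose n t ≤ Nat.choose (n - e) (t - e) * M ^ e :=
      ih (by omega) (fun i hi => hcond i (by omega))
    have hte : 1 ≤ t - e := by omega
    have hne : 1 ≤ n - e := by omega
    have hid : (n - e) * Nat.choose (n - e - 1) (t - e - 1)
        = Nat.choose (n - e) (t - e) * (t - e) := by
      have := Nat.add_one_mul_choose_eq (n - e - 1) (t - e - 1)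
      have h2 : n - e - 1 + 1 = n - e := by omega
      have h3 : t - e - 1 + 1 = t - e := by omega
      simp only [Nat.succ_eq_add_one, h2, h3] at this
      exact this
    have hkey : Nat.choose (n - e) (t - e) ≤ Nat.choose (n - e - 1) (t - e - 1) * M := by
      have hc := hcond e (Nat.lt_succ_self e)
      have : Nat.choose (n - e) (t - e) * (t - e)
          ≤ (Nat.choose (n - e - 1) (t - e - 1) * M) * (t - e) := by
        calc Nat.choose (n - e) (t - e) * (t - e)
            = (n - e) * Nat.choose (n - e - 1) (t - e - 1) := hid.symm
          _ ≤ ((t - e) * M) * Nat.choose (n - e - 1) (t - e - 1) :=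
              Nat.mul_le_mul_right _ hc
          _ = (Nat.choose (n - e - 1) (t - e - 1) * M) * (t - e) := by ring
      exact Nat.le_of_mul_le_mul_right this hte
    calc Nat.choose n t ≤ Nat.choose (n - e) (t - e) * M ^ e := h1
      _ ≤ (Nat.choose (n - e - 1) (t - e - 1) * M) * M ^ e :=
          Nat.mul_le_mul_right _ hkey
      _ = Nat.choose (n - (e + 1)) (t - (e + 1)) * M ^ (e + 1) := by
          rw [Nat.sub_sub, Nat.sub_sub]; ring

open Classical in
/-- if a bipartite graph with `2^{k+c}` right vertices is a
`(2^k, 2^{k-1}+1)`-expander and has more than `2^ℓ` left vertices, then all but fewer than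
`2^ℓ` left vertices have degree strictly greater than `min (2^{k-2}) ((ℓ-k)/(c+2))`. -/
theorem stmt7 {L R : Type*} [Fintype L] [Fintype R] [DecidableEq R]
    (k ℓ c : ℕ) (hkl : k ≤ ℓ)
    (hR : Fintype.card R = 2 ^ (k + c)) (hL : 2 ^ ℓ < Fintype.card L)
    (N : L → Finset R)
    (hexp : ∀ S : Finset L, S.card = 2 ^ k →
        2 ^ (k - 1) + 1 ≤ (S.biUnion N).card) :
    (Finset.univ.filter fun x : L =>
        (N x).card ≤ min (2 ^ (k - 2)) ((ℓ - k) / (c + 2))).card < 2 ^ ℓ := by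
  by_contra hcon
  push_neg at hcon
  set d : ℕ := min (2 ^ (k - 2)) ((ℓ - k) / (c + 2)) with hd
  set t : ℕ := 2 ^ (k - 1) with htdef
  set n : ℕ := 2 ^ (k + c) with hndef
  set B : Finset L := Finset.univ.filter (fun x : L => (N x).card ≤ d) with hB
  have hdk : d ≤ 2 ^ (k - 2) := min_le_left _ _
  have hdl : (c + 2) * d ≤ ℓ - k := by
    have h1 : d ≤ (ℓ - k) / (c + 2) := min_le_right _ _
    calc (c + 2) * d ≤ (c + 2) * ((ℓ - k) / (c + 2)) := Nat.mul_le_mul_left _ h1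
      _ = (ℓ - k) / (c + 2) * (c + 2) := mul_comm _ _
      _ ≤ ℓ - k := Nat.div_mul_le_self _ _
  have hk2k1 : 2 ^ (k - 2) ≤ t := Nat.pow_le_pow_right (by norm_num) (by omega)
  have htn : t ≤ n := Nat.pow_le_pow_right (by norm_num) (by omega)
  -- key per-step ratio bound
  have hratio : ∀ i, i < d → n - i ≤ (t - i) * 2 ^ (c + 2) := by
    intro i hi
    have hik : i < 2 ^ (k - 2) := lt_of_lt_of_le hi hdk
    have hti : 2 ^ (k - 2) ≤ t - i := by
      rcases Nat.lt_or_ge k 2 with hk | hk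
      · interval_cases k <;> simp_all <;> omega
      · have : t = 2 ^ (k - 2) * 2 := by
          rw [htdef, ← Nat.pow_succ]
          congr 1
          omega
        omega
    calc n - i ≤ n := Nat.sub_le _ _
      _ = 2 ^ (k + c) := hndef
      _ ≤ 2 ^ (k - 2 + (c + 2)) := Nat.pow_le_pow_right (by norm_num) (by omega)
      _ = 2 ^ (k - 2) * 2 ^ (c + 2) := by rw [pow_add]
      _ ≤ (t - i) * 2 ^ (c + 2) := Nat.mul_le_mul_right _ hti
  set 𝒯 : Finset (Finset R) := Finset.powersetCard t Finset.univ with hT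
  have hTcard : 𝒯.card = Nat.choose n t := by
    rw [hT, Finset.card_powersetCard, Finset.card_univ, hR]
  have hCpos : 0 < Nat.choose n t := Nat.choose_pos htn
  -- per-vertex lower bound on number of covering sets
  have hper : ∀ x ∈ B, Nat.choose n t
      ≤ (𝒯.filter fun T => N x ⊆ T).card * (2 ^ (c + 2)) ^ d := by
    intro x hx
    have hxd : (N x).card ≤ d := by
      rw [hB] at hx; simpa using hx
    set e := (N x).card with he
    have het : e ≤ t := le_trans (le_trans hxd hdk) hk2k1
    have hchoose : Nat.choose n t ≤ Nat.choose (n - e) (t - e) * (2 ^ (c + 2)) ^ e :=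
      choose_le_aux (2 ^ (c + 2)) n t htn e het
        (fun i hi => hratio i (lt_of_lt_of_le hi hxd))
    have hcount : Nat.choose (n - e) (t - e) ≤ (𝒯.filter fun T => N x ⊆ T).card := by
      have hdomcard : (Finset.powersetCard (t - e) (Finset.univ \ N x)).card
          = Nat.choose (n - e) (t - e) := by
        rw [Finset.card_powersetCard, Finset.card_sdiff_of_subset (Finset.subset_univ _),
          Finset.card_univ, hR]
      rw [← hdomcard]
      apply Finset.card_le_card_of_injOn (fun U => U ∪ N x)
      · intro U hU
        rw [Finset.mem_coe, Finset.mem_powersetCard] at hU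
        obtain ⟨hUsub, hUcard⟩ := hU
        have hdisj : Disjoint U (N x) :=
          Finset.disjoint_left.2 fun a ha => by
            have := hUsub ha
            rw [Finset.mem_sdiff] at this
            exact fun h => this.2 h
        rw [Finset.mem_coe, Finset.mem_filter]
        constructor
        · rw [hT, Finset.mem_powersetCard]
          refine ⟨Finset.subset_univ _, ?_⟩
          rw [Finset.card_union_of_disjoint hdisj, hUcard]
          omega
        · exact Finset.subset_union_right
      · intro U hU V hV huv
        simp only [Finset.mem_coe, Finset.mem_powersetCard] at hU hV
        have hUd : Disjoint U (N x) :=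
          Finset.disjoint_left.2 fun a ha h =>
            (Finset.mem_sdiff.1 (hU.1 ha)).2 h
        have hVd : Disjoint V (N x) :=
          Finset.disjoint_left.2 fun a ha h =>
            (Finset.mem_sdiff.1 (hV.1 ha)).2 h
        have : (U ∪ N x) \ N x = (V ∪ N x) \ N x := by
          simp only at huv
          rw [huv]
        rwa [Finset.union_sdiff_cancel_right hUd,
          Finset.union_sdiff_cancel_right hVd] at this
    calc Nat.choose n t ≤ Nat.choose (n - e) (t - e) * (2 ^ (c + 2)) ^ e := hchoose
      _ ≤ (𝒯.filter fun T => N x ⊆ T).card * (2 ^ (c + 2)) ^ e :=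
          Nat.mul_le_mul_right _ hcount
      _ ≤ (𝒯.filter fun T => N x ⊆ T).card * (2 ^ (c + 2)) ^ d :=
          Nat.mul_le_mul_left _ (Nat.pow_le_pow_right (by positivity) hxd)
  -- double counting
  have hswap : ∑ T ∈ 𝒯, (B.filter fun x => N x ⊆ T).card
      = ∑ x ∈ B, (𝒯.filter fun T => N x ⊆ T).card := by
    simp_rw [Finset.card_filter]
    exact Finset.sum_comm
  have hBcard : 2 ^ ℓ ≤ B.card := hcon
  -- total sum lower bound
  have hsum1 : 2 ^ ℓ * Nat.choose n t
      ≤ (∑ T ∈ 𝒯, (B.filter fun x => N x ⊆ T).card) * (2 ^ (c + 2)) ^ d := by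
    calc 2 ^ ℓ * Nat.choose n t ≤ B.card * Nat.choose n t :=
          Nat.mul_le_mul_right _ hBcard
      _ = ∑ _x ∈ B, Nat.choose n t := by rw [Finset.sum_const, smul_eq_mul]
      _ ≤ ∑ x ∈ B, (𝒯.filter fun T => N x ⊆ T).card * (2 ^ (c + 2)) ^ d :=
          Finset.sum_le_sum hper
      _ = (∑ x ∈ B, (𝒯.filter fun T => N x ⊆ T).card) * (2 ^ (c + 2)) ^ d := by
          rw [Finset.sum_mul]
      _ = (∑ T ∈ 𝒯, (B.filter fun x => N x ⊆ T).card) * (2 ^ (c + 2)) ^ d := by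
          rw [hswap]
  have hpowle : (2 ^ (c + 2)) ^ d ≤ 2 ^ (ℓ - k) := by
    rw [← pow_mul]
    exact Nat.pow_le_pow_right (by norm_num) hdl
  have hsum2 : 2 ^ k * Nat.choose n t ≤ ∑ T ∈ 𝒯, (B.filter fun x => N x ⊆ T).card := by
    set S := ∑ T ∈ 𝒯, (B.filter fun x => N x ⊆ T).card with hS
    have h1 : 2 ^ k * Nat.choose n t * 2 ^ (ℓ - k) ≤ S * 2 ^ (ℓ - k) := by
      calc 2 ^ k * Nat.choose n t * 2 ^ (ℓ - k)
          = 2 ^ ℓ * Nat.choose n t := by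
            rw [mul_right_comm, ← pow_add]
            congr 2
            omega
        _ ≤ S * (2 ^ (c + 2)) ^ d := hsum1
        _ ≤ S * 2 ^ (ℓ - k) := Nat.mul_le_mul_left _ hpowle
    exact Nat.le_of_mul_le_mul_right h1 (Nat.pow_pos (by norm_num))
  -- extract a heavy T
  have hheavy : ∃ T ∈ 𝒯, 2 ^ k ≤ (B.filter fun x => N x ⊆ T).card := by
    by_contra hno
    push_neg at hno
    have hle : ∑ T ∈ 𝒯, (B.filter fun x => N x ⊆ T).card ≤ 𝒯.card * (2 ^ k - 1) := by
      apply Finset.sum_le_card_nsmul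
      intro T hTm
      have := hno T hTm
      omega
    rw [hTcard] at hle
    have h2 : 2 ^ k * Nat.choose n t ≤ Nat.choose n t * (2 ^ k - 1) := le_trans hsum2 hle
    have h3 : Nat.choose n t * (2 ^ k - 1) < Nat.choose n t * 2 ^ k :=
      (Nat.mul_lt_mul_left hCpos).2 (by have : 0 < 2 ^ k := Nat.pow_pos (by norm_num); omega)
    rw [mul_comm] at h2
    omega
  obtain ⟨T, hTm, hTheavy⟩ := hheavy
  obtain ⟨S, hSsub, hScard⟩ := Finset.exists_subset_card_eq hTheavy
  have hexpS := hexp S hScard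
  have hbi : S.biUnion N ⊆ T := by
    apply Finset.biUnion_subset.2
    intro x hx
    have := hSsub hx
    rw [Finset.mem_filter] at this
    exact this.2
  have hbicard : (S.biUnion N).card ≤ T.card := Finset.card_le_card hbi
  have hTc : T.card = t := (Finset.mem_powersetCard.1 hTm).2
  rw [hTc] at hbicard
  omega
end

section
/- Fix k and let K = 2^{k+3}. Consider a random bipartite graph where each left vertex x of length between k and K independently chooses |x|+3 uniformly random neighbors among the 2^{k+3} right vertices. Then with positive probability the resulting graph is a (2^k, 2^k)-expander. -/
set_option maxHeartbeats 1000000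

open Finset in
lemma sum_prod_powersetCard_le {ι : Type*} [Fintype ι] [DecidableEq ι] (p : ι → ℝ)
    (hp : ∀ x, 0 ≤ p x) (s : ℕ) :
    ∑ S ∈ powersetCard s (univ : Finset ι), ∏ x ∈ S, p x ≤ (∑ x, p x) ^ s := by
  classical
  rcases isEmpty_or_nonempty ι with hι | hι
  · rcases Nat.eq_zero_or_pos s with rfl | hs
    · simp
    · rw [Finset.univ_eq_empty, Finset.powersetCard_eq_empty.2 (by simpa using hs)]
      simp [Finset.univ_eq_empty, zero_pow hs.ne']
  · inhabit ι
    set F : Finset ι → (Fin s → ι) := fun S =>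
      if h : S.card = s then fun i => ((Finset.equivFinOfCardEq h).symm i : ι)
      else fun _ => default with hF
    have himg : ∀ S : Finset ι, S.card = s → Finset.image (F S) univ = S := by
      intro S h
      ext y
      simp only [Finset.mem_image, Finset.mem_univ, true_and, hF, dif_pos h]
      constructor
      · rintro ⟨i, rfl⟩; exact ((Finset.equivFinOfCardEq h).symm i).2
      · intro hy; exact ⟨Finset.equivFinOfCardEq h ⟨y, hy⟩, by simp⟩
    have hFinj : ∀ (S : Finset ι), S.card = s → Function.Injective (F S) := by
      intro S h a b hab
      simp only [hF, dif_pos h] at hab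
      exact (Finset.equivFinOfCardEq h).symm.injective (Subtype.val_injective hab)
    have hinj : ∀ S ∈ powersetCard s (univ : Finset ι), ∀ S' ∈ powersetCard s (univ : Finset ι),
        F S = F S' → S = S' := by
      intro S hS S' hS' hFF
      rw [Finset.mem_powersetCard] at hS hS'
      rw [← himg S hS.2, ← himg S' hS'.2, hFF]
    have hprod : ∀ S ∈ powersetCard s (univ : Finset ι),
        ∏ x ∈ S, p x = ∏ i : Fin s, p (F S i) := by
      intro S hS
      rw [Finset.mem_powersetCard] at hS
      have h1 : ∏ x ∈ (univ : Finset (Fin s)).image (F S), p x = ∏ i : Fin s, p (F S i) :=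
        Finset.prod_image (fun a _ b _ hab => hFinj S hS.2 hab)
      rw [himg S hS.2] at h1
      exact h1
    calc ∑ S ∈ powersetCard s (univ : Finset ι), ∏ x ∈ S, p x
        = ∑ S ∈ powersetCard s (univ : Finset ι), ∏ i : Fin s, p (F S i) :=
          Finset.sum_congr rfl hprod
      _ = ∑ f ∈ (powersetCard s (univ : Finset ι)).image F, ∏ i : Fin s, p (f i) :=
          (Finset.sum_image (s := powersetCard s univ) (g := F)
            (f := fun h : Fin s → ι => ∏ i : Fin s, p (h i)) hinj).symm
      _ ≤ ∑ f : Fin s → ι, ∏ i : Fin s, p (f i) := by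
          apply Finset.sum_le_sum_of_subset_of_nonneg (Finset.subset_univ _)
          intro f _ _
          exact Finset.prod_nonneg fun i _ => hp _
      _ = (∑ x, p x) ^ s := by
          rw [Finset.sum_pow' univ p s, Fintype.piFinset_univ]

private lemma term_bound (kk i a : ℕ) (r : ℝ) (hr0 : 0 ≤ r) (hr8 : r ≤ 8⁻¹)
    (ha : a = kk + i) :
    (2:ℝ) ^ a * r ^ (a + 3) ≤ ((2:ℝ) ^ (2*kk+9))⁻¹ * ((2:ℝ)⁻¹) ^ i := by
  have h1 : r ^ (a+3) ≤ ((8:ℝ)⁻¹) ^ (a+3) := pow_le_pow_left₀ hr0 hr8 _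
  have h2 : (2:ℝ) ^ a * ((8:ℝ)⁻¹) ^ (a+3) = ((2:ℝ) ^ (2*a+9))⁻¹ := by
    rw [show (8:ℝ) = 2^3 by norm_num, inv_pow, ← pow_mul]
    rw [show 3 * (a+3) = a + (2*a+9) by ring, pow_add, mul_inv, ← mul_assoc,
      mul_inv_cancel₀ (by positivity), one_mul]
  have h3 : ((2:ℝ) ^ (2*a+9))⁻¹ ≤ ((2:ℝ) ^ (2*kk+9))⁻¹ * ((2:ℝ)⁻¹) ^ i := by
    rw [inv_pow, ← mul_inv, ← pow_add]
    rw [inv_le_inv₀ (by positivity) (by positivity)]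
    apply pow_le_pow_right₀ one_le_two
    omega
  calc (2:ℝ) ^ a * r ^ (a+3) ≤ (2:ℝ) ^ a * ((8:ℝ)⁻¹) ^ (a+3) :=
        mul_le_mul_of_nonneg_left h1 (by positivity)
    _ = ((2:ℝ) ^ (2*a+9))⁻¹ := h2
    _ ≤ _ := h3

/-- The binary strings of length between `k` and `2^{k+3}`: a string of length `k + i` is
encoded as the pair of `i : Fin (2^{k+3} + 1 - k)` and a function `Fin (k+i) → Bool`. -/
def MidStrings (k : ℕ) : Type := Σ i : Fin (2 ^ (k + 3) + 1 - k), Fin (k + i.1) → Bool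
/-- length of such a string -/
def midLen {k : ℕ} (x : MidStrings k) : ℕ := k + x.1.1

instance (k : ℕ) : DecidableEq (MidStrings k) := by unfold MidStrings; infer_instance
instance (k : ℕ) : Fintype (MidStrings k) := by unfold MidStrings; infer_instance

lemma exists_good (k : ℕ) :
    ∃ g : (x : MidStrings k) → Fin (midLen x + 3) → (Fin (k + 3) → Bool),
      ∀ S : Finset (MidStrings k), S.card = 2 ^ k →
        2 ^ k ≤ (S.biUnion fun x => Finset.image (g x) Finset.univ).card := by
  classical
  set R := (Fin (k + 3) → Bool) with hR
  set ι := MidStrings k with hι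
  set m : ι → ℕ := fun x => midLen x + 3 with hm
  set N : ℕ := 2 ^ (k + 3) with hN
  set t : ℕ := 2 ^ k - 1 with ht
  have hcardR : Fintype.card R = N := by simp [hR, hN]
  by_contra hcon
  push_neg at hcon
  -- the bad events
  set E : Finset ι × Finset R → Finset ((x : ι) → Fin (m x) → R) := fun p =>
    Fintype.piFinset fun x => Fintype.piFinset fun _ : Fin (m x) =>
      if x ∈ p.1 then p.2 else Finset.univ with hE
  set 𝒮 : Finset (Finset ι) := Finset.powersetCard (2 ^ k) Finset.univ with h𝒮
  set 𝒯 : Finset (Finset R) := Finset.powersetCard t Finset.univ with h𝒯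
  -- every g is bad
  have hcover : (Finset.univ : Finset ((x : ι) → Fin (m x) → R)) ⊆
      (𝒮 ×ˢ 𝒯).biUnion E := by
    intro g _
    obtain ⟨S, hScard, hNg⟩ := hcon g
    have hNgcard : (S.biUnion fun x => Finset.image (g x) Finset.univ).card ≤ t :=
      Nat.le_sub_one_of_lt hNg
    obtain ⟨T, hTsub, hTuniv, hTcard⟩ := Finset.exists_subsuperset_card_eq
      (Finset.subset_univ (S.biUnion fun x => Finset.image (g x) Finset.univ)) hNgcard
      (by rw [Finset.card_univ, hcardR, hN, ht]
          exact le_trans tsub_le_self (Nat.pow_le_pow_right (by norm_num) (by omega)))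
    refine Finset.mem_biUnion.2 ⟨(S, T), ?_, ?_⟩
    · rw [Finset.mem_product]
      exact ⟨Finset.mem_powersetCard_univ.2 hScard, Finset.mem_powersetCard_univ.2 hTcard⟩
    · rw [hE]
      refine Fintype.mem_piFinset.2 fun x => Fintype.mem_piFinset.2 fun j => ?_
      by_cases hx : x ∈ S
      · simp only [hx, if_pos]
        exact hTsub (Finset.mem_biUnion.2 ⟨x, hx,
          Finset.mem_image.2 ⟨j, Finset.mem_univ _, rfl⟩⟩)
      · simp [hx]
  -- cardinality comparison
  have hcard : Fintype.card ((x : ι) → Fin (m x) → R) ≤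
      ∑ S ∈ 𝒮, ∑ T ∈ 𝒯, (E (S, T)).card := by
    rw [← Finset.card_univ]
    calc (Finset.univ : Finset ((x : ι) → Fin (m x) → R)).card
        ≤ ((𝒮 ×ˢ 𝒯).biUnion E).card := Finset.card_le_card hcover
      _ ≤ ∑ p ∈ 𝒮 ×ˢ 𝒯, (E p).card := Finset.card_biUnion_le
      _ = ∑ S ∈ 𝒮, ∑ T ∈ 𝒯, (E (S, T)).card := Finset.sum_product _ _ _
  -- compute the cardinalities
  have hcardΩ : Fintype.card ((x : ι) → Fin (m x) → R) = ∏ x : ι, N ^ m x := by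
    rw [Fintype.card_pi]
    exact Finset.prod_congr rfl fun x _ => by
      rw [Fintype.card_fun, hcardR, Fintype.card_fin]
  have hcardE : ∀ S ∈ 𝒮, ∀ T ∈ 𝒯,
      (E (S, T)).card = ∏ x : ι, (if x ∈ S then t else N) ^ m x := by
    intro S hS T hT
    rw [hE]
    rw [Fintype.card_piFinset]
    refine Finset.prod_congr rfl fun x _ => ?_
    rw [Fintype.card_piFinset]
    simp only [Finset.prod_const, Finset.card_univ, Fintype.card_fin]
    by_cases hx : x ∈ S
    · simp only [hx, if_pos]
      rw [Finset.mem_powersetCard_univ.1 hT]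
    · simp [hx, Finset.card_univ, hcardR]
  -- move to the reals
  set r : ℝ := (t : ℝ) / N with hr
  have hNpos : (0:ℝ) < (N:ℝ) := by rw [hN]; positivity
  have hrnn : 0 ≤ r := by rw [hr]; positivity
  have hr8 : r ≤ 8⁻¹ := by
    rw [hr, div_le_iff₀ hNpos]
    have h1 : (t:ℝ) ≤ (2:ℝ)^k := by
      have : (t:ℕ) ≤ 2^k := Nat.sub_le _ _
      calc (t:ℝ) ≤ ((2^k : ℕ) : ℝ) := Nat.cast_le.2 this
        _ = (2:ℝ)^k := by push_cast; ring
    calc (t:ℝ) ≤ (2:ℝ)^k := h1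
      _ = 8⁻¹ * (N:ℝ) := by
          rw [hN]; push_cast [pow_add]; ring
  set q : ι → ℝ := fun x => r ^ m x with hq
  have hqnn : ∀ x, 0 ≤ q x := fun x => pow_nonneg hrnn _
  -- the main real inequality
  have h1 : (∏ x : ι, (N:ℝ) ^ m x) ≤
      ∑ S ∈ 𝒮, ∑ T ∈ 𝒯, ∏ x : ι, ((if x ∈ S then t else N : ℕ) : ℝ) ^ m x := by
    have hcard' : (∏ x : ι, N ^ m x) ≤
        ∑ S ∈ 𝒮, ∑ T ∈ 𝒯, ∏ x : ι, (if x ∈ S then t else N) ^ m x := by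
      rw [← hcardΩ]
      calc Fintype.card ((x : ι) → Fin (m x) → R)
          ≤ ∑ S ∈ 𝒮, ∑ T ∈ 𝒯, (E (S, T)).card := hcard
        _ = ∑ S ∈ 𝒮, ∑ T ∈ 𝒯, ∏ x : ι, (if x ∈ S then t else N) ^ m x :=
            Finset.sum_congr rfl fun S hS => Finset.sum_congr rfl fun T hT => hcardE S hS T hT
    exact_mod_cast hcard'
  have h2 : ∀ S ∈ 𝒮, (∏ x : ι, ((if x ∈ S then t else N : ℕ) : ℝ) ^ m x)
      = (∏ x : ι, (N:ℝ) ^ m x) * ∏ x ∈ S, q x := by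
    intro S _
    calc ∏ x : ι, ((if x ∈ S then t else N : ℕ) : ℝ) ^ m x
        = (∏ x ∈ S, ((if x ∈ S then t else N : ℕ) : ℝ) ^ m x) *
            ∏ x ∈ Sᶜ, ((if x ∈ S then t else N : ℕ) : ℝ) ^ m x :=
          (Finset.prod_mul_prod_compl S _).symm
      _ = (∏ x ∈ S, ((N:ℝ) ^ m x * q x)) * ∏ x ∈ Sᶜ, (N:ℝ) ^ m x := by
          congr 1
          · refine Finset.prod_congr rfl fun x hx => ?_
            rw [if_pos hx, hq]
            rw [← mul_pow]
            congr 1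
            rw [hr, mul_div_cancel₀ _ (ne_of_gt hNpos)]
          · refine Finset.prod_congr rfl fun x hx => ?_
            rw [if_neg (Finset.mem_compl.1 hx)]
      _ = ((∏ x ∈ S, (N:ℝ) ^ m x) * ∏ x ∈ S, q x) * ∏ x ∈ Sᶜ, (N:ℝ) ^ m x := by
          rw [Finset.prod_mul_distrib]
      _ = (∏ x : ι, (N:ℝ) ^ m x) * ∏ x ∈ S, q x := by
          rw [mul_right_comm, Finset.prod_mul_prod_compl]
  have hPn : (0:ℝ) < ∏ x : ι, (N:ℝ) ^ m x :=
    Finset.prod_pos fun x _ => pow_pos hNpos _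
  have h3 : (1:ℝ) ≤ (𝒯.card : ℝ) * ∑ S ∈ 𝒮, ∏ x ∈ S, q x := by
    rw [← le_mul_iff_one_le_right hPn]
    calc (∏ x : ι, (N:ℝ) ^ m x)
        ≤ ∑ S ∈ 𝒮, ∑ T ∈ 𝒯, ∏ x : ι, ((if x ∈ S then t else N : ℕ) : ℝ) ^ m x := h1
      _ = ∑ S ∈ 𝒮, (𝒯.card : ℝ) * ((∏ x : ι, (N:ℝ) ^ m x) * ∏ x ∈ S, q x) := by
          refine Finset.sum_congr rfl fun S hS => ?_
          rw [Finset.sum_congr rfl fun T (hT : T ∈ 𝒯) => h2 S hS]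
          rw [Finset.sum_const, nsmul_eq_mul]
      _ = (∏ x : ι, (N:ℝ) ^ m x) * ((𝒯.card : ℝ) * ∑ S ∈ 𝒮, ∏ x ∈ S, q x) := by
          rw [Finset.mul_sum, Finset.mul_sum]
          exact Finset.sum_congr rfl fun S hS => by ring
  -- now the numerical bound
  have hqsum : ∑ x : ι, q x ≤ ((2:ℝ) ^ (2*k+8))⁻¹ := by
    have hsigma : ∑ x : ι, q x =
        ∑ i : Fin (2 ^ (k + 3) + 1 - k), ∑ v : Fin (k + i.1) → Bool, r ^ (k + i.1 + 3) :=
      Finset.sum_sigma _ _ _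
    rw [hsigma]
    have hterm : ∀ i : Fin (2 ^ (k + 3) + 1 - k),
        ∑ v : Fin (k + i.1) → Bool, r ^ (k + i.1 + 3)
          ≤ ((2:ℝ) ^ (2*k+9))⁻¹ * ((2:ℝ)⁻¹) ^ i.1 := by
      intro i
      rw [Finset.sum_const, nsmul_eq_mul, Finset.card_univ]
      have hcardv : (Fintype.card (Fin (k + i.1) → Bool) : ℝ) = (2:ℝ) ^ (k + i.1) := by
        rw [Fintype.card_fun, Fintype.card_fin, Fintype.card_bool]; push_cast; ring
      rw [hcardv]
      exact term_bound k i.1 (k + i.1) r hrnn hr8 rfl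
    calc ∑ i : Fin (2 ^ (k + 3) + 1 - k), ∑ v : Fin (k + i.1) → Bool, r ^ (k + i.1 + 3)
        ≤ ∑ i : Fin (2 ^ (k + 3) + 1 - k), ((2:ℝ) ^ (2*k+9))⁻¹ * ((2:ℝ)⁻¹) ^ i.1 :=
          Finset.sum_le_sum fun i _ => hterm i
      _ = ((2:ℝ) ^ (2*k+9))⁻¹ * ∑ i : Fin (2 ^ (k + 3) + 1 - k), ((2:ℝ)⁻¹) ^ i.1 := by
          rw [Finset.mul_sum]
      _ ≤ ((2:ℝ) ^ (2*k+9))⁻¹ * 2 := by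
          apply mul_le_mul_of_nonneg_left _ (by positivity)
          rw [Fin.sum_univ_eq_sum_range (fun j => ((2:ℝ)⁻¹) ^ j)]
          have := sum_geometric_two_le (2 ^ (k + 3) + 1 - k)
          simpa [one_div] using this
      _ = ((2:ℝ) ^ (2*k+8))⁻¹ := by
          rw [show 2*k+9 = (2*k+8)+1 by ring, pow_succ, mul_inv, mul_assoc,
            inv_mul_cancel₀ (by norm_num : (2:ℝ) ≠ 0), mul_one]
  have h𝒯card : (𝒯.card : ℝ) ≤ (2:ℝ) ^ ((k+3) * t) := by
    have : 𝒯.card = (Fintype.card R).choose t := by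
      rw [h𝒯, Finset.card_powersetCard, Finset.card_univ]
    rw [this, hcardR, hN]
    calc ((Nat.choose (2^(k+3)) t : ℕ) : ℝ) ≤ (((2^(k+3))^t : ℕ) : ℝ) :=
          Nat.cast_le.2 (Nat.choose_le_pow _ _)
      _ = (2:ℝ) ^ ((k+3) * t) := by push_cast [← pow_mul]; ring
  have hfinal : (𝒯.card : ℝ) * ∑ S ∈ 𝒮, ∏ x ∈ S, q x < 1 := by
    have hs1 : ∑ S ∈ 𝒮, ∏ x ∈ S, q x ≤ (∑ x : ι, q x) ^ (2^k) := by
      rw [h𝒮]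
      exact sum_prod_powersetCard_le q hqnn _
    have hs2 : (∑ x : ι, q x) ^ (2^k) ≤ (((2:ℝ) ^ (2*k+8))⁻¹) ^ (2^k) :=
      pow_le_pow_left₀ (Finset.sum_nonneg fun x _ => hqnn x) hqsum _
    have hs3 : (0:ℝ) ≤ ∑ S ∈ 𝒮, ∏ x ∈ S, q x :=
      Finset.sum_nonneg fun S _ => Finset.prod_nonneg fun x _ => hqnn x
    calc (𝒯.card : ℝ) * ∑ S ∈ 𝒮, ∏ x ∈ S, q x
        ≤ (2:ℝ) ^ ((k+3) * t) * ((((2:ℝ) ^ (2*k+8))⁻¹) ^ (2^k)) := by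
          apply mul_le_mul h𝒯card (hs1.trans hs2) hs3 (by positivity)
      _ < 1 := by
          rw [← inv_pow, ← pow_mul, inv_pow, ← div_eq_mul_inv]
          rw [div_lt_one (by positivity)]
          apply pow_lt_pow_right₀ one_lt_two
          rw [ht]
          calc (k+3) * (2^k - 1) ≤ (k+3) * 2^k := Nat.mul_le_mul_left _ (Nat.sub_le _ _)
            _ < (2*k+8) * 2^k :=
                (Nat.mul_lt_mul_right (Nat.two_pow_pos k)).2 (by omega)
  linarith

/-- choosing, independently for every binary string `x` of length between `k`
and `K = 2^{k+3}`, a multiset of `|x|+3` uniformly random neighbors among the `2^{k+3}` right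
vertices, yields a `(2^k, 2^k)`-expander with positive probability: a positive fraction of
all such graphs `g` (a positive number of them) are `(2^k, 2^k)`-expanders. -/
theorem stmt10 (k : ℕ) :
    0 < Nat.card {g : (x : MidStrings k) → Fin (midLen x + 3) → (Fin (k + 3) → Bool) //
        ∀ S : Finset (MidStrings k), S.card = 2 ^ k →
          2 ^ k ≤ (S.biUnion fun x => Finset.image (g x) Finset.univ).card} := by
  obtain ⟨g, hg⟩ := exists_good k
  haveI : Nonempty {g : (x : MidStrings k) → Fin (midLen x + 3) → (Fin (k + 3) → Bool) //
      ∀ S : Finset (MidStrings k), S.card = 2 ^ k →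
        2 ^ k ≤ (S.biUnion fun x => Finset.image (g x) Finset.univ).card} := ⟨⟨g, hg⟩⟩
  exact Nat.card_pos
end

section
/- For every constant δ and all K, n, given an explicit (K, δ)-disperser with left set {0,1}^n, right set of size αKD/n^3 and left degree D = poly(n), the graph obtained by taking t = max(1, ⌈2n^3/(αD)⌉) disjoint copies of the right set (identifying the left sets) is a (K, K)-expander with K·poly(n) right vertices and left degree poly(n). -/
/-- The number `t = max 1 ⌈2n³/(αD)⌉` of copies taken of the disperser. -/
noncomputable def tcopies (n D : ℕ) (α : ℝ) : ℕ := max 1 ⌈(2 * (n : ℝ) ^ 3) / (α * D)⌉₊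

/-- from an explicit `(K, 1/2)`-disperser with left set `{0,1}^n`, right set of
size `αKD/n³` and left degree `D = poly(n)`, taking `t = max 1 ⌈2n³/(αD)⌉` disjoint copies of
the right set (identifying the left sets) gives a `(K, K)`-expander with `K·poly(n)` right
vertices and left degree `poly(n)`. -/
theorem stmt12 {R : Type*} [Fintype R] [DecidableEq R]
    (K n D a : ℕ) (α : ℝ) (hn : 2 ≤ n) (hα : 0 < α) (hD : 0 < D) (hDa : D ≤ n ^ a)
    (N : (Fin n → Bool) → Finset R)
    (hdeg : ∀ x, (N x).card ≤ D)
    (hcard : (Fintype.card R : ℝ) = α * K * D / n ^ 3)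
    (hdisp : ∀ B : Finset (Fin n → Bool), K ≤ B.card →
        (1 - 1 / 2 : ℝ) * Fintype.card R ≤ ((B.biUnion N).card : ℝ)) :
    ∃ b : ℕ,
      (∀ x, (((Finset.univ : Finset (Fin (tcopies n D α))) ×ˢ N x).card ≤ n ^ b)) ∧
      ((Fintype.card (Fin (tcopies n D α) × R) : ℝ) ≤ K * n ^ b) ∧
      (∀ S : Finset (Fin n → Bool), S.card = K →
        K ≤ (S.biUnion fun x =>
              (Finset.univ : Finset (Fin (tcopies n D α))) ×ˢ N x).card) := by

  classical
  set t := tcopies n D α with htdef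
  have ht1 : 1 ≤ t := le_max_left _ _
  have hn0 : (0:ℝ) < n := by positivity
  have hD0 : (0:ℝ) < D := by exact_mod_cast hD
  have htR : (2 * (n:ℝ) ^ 3) / (α * D) ≤ (t : ℝ) := by
    calc (2 * (n:ℝ) ^ 3) / (α * D) ≤ (⌈(2 * (n:ℝ) ^ 3) / (α * D)⌉₊ : ℝ) := Nat.le_ceil _
    _ ≤ (t : ℝ) := Nat.cast_le.mpr (le_max_right 1 _)
  set b := t * D + t * Fintype.card R with hb
  have hbn : b < n ^ b := by
    calc b < 2 ^ b := Nat.lt_two_pow_self (n := b)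
    _ ≤ n ^ b := Nat.pow_le_pow_left hn b
  refine ⟨b, ?_, ?_, ?_⟩
  · intro x
    rw [Finset.card_product, Finset.card_univ, Fintype.card_fin]
    have : t * (N x).card ≤ t * D := Nat.mul_le_mul_left t (hdeg x)
    omega
  · rw [Fintype.card_prod, Fintype.card_fin]
    rcases Nat.eq_zero_or_pos K with hK | hK
    · have hR0 : Fintype.card R = 0 := by
        have : (Fintype.card R : ℝ) = 0 := by rw [hcard, hK]; push_cast; ring
        exact_mod_cast this
      simp [hR0, hK]
    · have h1 : t * Fintype.card R ≤ K * n ^ b := by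
        calc t * Fintype.card R ≤ b := by omega
        _ ≤ n ^ b := hbn.le
        _ ≤ K * n ^ b := Nat.le_mul_of_pos_left _ hK
      exact_mod_cast h1
  · intro S hS
    have hB := hdisp S (le_of_eq hS.symm)
    have heq : (S.biUnion fun x =>
        (Finset.univ : Finset (Fin t)) ×ˢ N x) =
        (Finset.univ : Finset (Fin t)) ×ˢ (S.biUnion N) := by
      ext ⟨i, r⟩
      simp [Finset.mem_biUnion]
    rw [heq, Finset.card_product, Finset.card_univ, Fintype.card_fin]
    have key : (K:ℝ) ≤ (t:ℝ) * ((S.biUnion N).card : ℝ) := by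
      have h2 : (t:ℝ) * ((Fintype.card R : ℝ) / 2) ≤ (t:ℝ) * ((S.biUnion N).card : ℝ) := by
        apply mul_le_mul_of_nonneg_left _ (by positivity)
        linarith [hB]
      have h3 : (K:ℝ) ≤ (t:ℝ) * ((Fintype.card R : ℝ) / 2) := by
        rw [hcard]
        have h4 : (2 * (n:ℝ) ^ 3) / (α * D) * (α * (K:ℝ) * D / (n:ℝ) ^ 3 / 2) = K := by
          field_simp
        calc (K:ℝ) = (2 * (n:ℝ) ^ 3) / (α * D) * (α * (K:ℝ) * D / (n:ℝ) ^ 3 / 2) := h4.symm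
        _ ≤ (t:ℝ) * (α * (K:ℝ) * D / (n:ℝ) ^ 3 / 2) := by
            apply mul_le_mul_of_nonneg_right htR
            positivity
      linarith
    exact_mod_cast key
end

section
/- Let G be a bipartite graph in which every left vertex has degree at most D, and let ε > 0. For any finite set S of left vertices, fewer than ε|S| left vertices of S have the property that every one of their neighbors has more than D/ε neighbors in S. -/
open Classical in
/-- let `G` be a bipartite graph with left degree at most `D` and `ε > 0`, and
let `S` be a (nonempty) finite set of left vertices.  Under the expansion hypothesis that
every set of `⌈ε|S|⌉` left vertices has at least `ε|S|` distinct right neighbors, fewer than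
`ε|S|` left vertices of `S` have the property that every one of their neighbors is "fat",
i.e. has more than `D/ε` neighbors in `S`. -/
theorem stmt15 {L R : Type*} [DecidableEq R] (N : L → Finset R) (D : ℕ)
    (hdeg : ∀ x, (N x).card ≤ D) (ε : ℝ) (hε : 0 < ε)
    (S : Finset L) (hSne : S.Nonempty)
    (hexp : ∀ T : Finset L, T.card = ⌈ε * S.card⌉₊ →
        ε * S.card ≤ ((T.biUnion N).card : ℝ)) :
    (((S.filter fun x => ∀ p ∈ N x,
        (D : ℝ) / ε < ((S.filter fun y => p ∈ N y).card : ℝ)).card : ℝ))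
      < ε * S.card := by
  by_contra h
  push_neg at h
  set B := S.filter fun x => ∀ p ∈ N x,
      (D : ℝ) / ε < ((S.filter fun y => p ∈ N y).card : ℝ) with hB
  have hn : ⌈ε * S.card⌉₊ ≤ B.card := Nat.ceil_le.mpr h
  obtain ⟨T, hTB, hTcard⟩ := Finset.exists_subset_card_eq hn
  have hF := hexp T hTcard
  set F := T.biUnion N with hFdef
  have hSpos : (0 : ℝ) < ε * S.card := by
    have := hSne.card_pos
    positivity
  have hFne : F.Nonempty := by
    rw [← Finset.card_pos]
    by_contra hc
    push_neg at hc
    interval_cases hcard : F.card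
    simp [hcard] at hF
    linarith
  -- every p in F is fat
  have hfat : ∀ p ∈ F, (D : ℝ) / ε < ((S.filter fun y => p ∈ N y).card : ℝ) := by
    intro p hp
    obtain ⟨x, hxT, hpx⟩ := Finset.mem_biUnion.mp hp
    have hxB := hTB hxT
    rw [hB, Finset.mem_filter] at hxB
    exact hxB.2 p hpx
  -- double counting upper bound
  have hsum : (∑ p ∈ F, ((S.filter fun y => p ∈ N y).card : ℝ)) ≤ (S.card : ℝ) * D := by
    have hnat : (∑ p ∈ F, (S.filter fun y => p ∈ N y).card) ≤ S.card * D := by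
      calc (∑ p ∈ F, (S.filter fun y => p ∈ N y).card)
          = ∑ p ∈ F, ∑ y ∈ S, (if p ∈ N y then 1 else 0) := by
            refine Finset.sum_congr rfl fun p _ => ?_
            rw [Finset.card_filter]
        _ = ∑ y ∈ S, ∑ p ∈ F, (if p ∈ N y then 1 else 0) := Finset.sum_comm
        _ ≤ ∑ y ∈ S, D := by
            refine Finset.sum_le_sum fun y _ => ?_
            calc (∑ p ∈ F, (if p ∈ N y then 1 else 0))
                = (F.filter fun p => p ∈ N y).card := by
                  rw [Finset.card_filter]
              _ ≤ (N y).card := Finset.card_le_card (by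
                  intro p hp
                  exact (Finset.mem_filter.mp hp).2)
              _ ≤ D := hdeg y
        _ = S.card * D := by rw [Finset.sum_const, smul_eq_mul]
    calc (∑ p ∈ F, ((S.filter fun y => p ∈ N y).card : ℝ))
        = ((∑ p ∈ F, (S.filter fun y => p ∈ N y).card : ℕ) : ℝ) := by push_cast; ring_nf
      _ ≤ ((S.card * D : ℕ) : ℝ) := by exact_mod_cast hnat
      _ = (S.card : ℝ) * D := by push_cast; ring
  -- lower bound
  have hlow : (F.card : ℝ) * ((D : ℝ) / ε) < ∑ p ∈ F, ((S.filter fun y => p ∈ N y).card : ℝ) := by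
    have := Finset.sum_lt_sum_of_nonempty hFne hfat
    simpa [Finset.sum_const, nsmul_eq_mul] using this
  have key : (S.card : ℝ) * D ≤ (F.card : ℝ) * ((D : ℝ) / ε) := by
    have h1 : ε * S.card * ((D : ℝ) / ε) ≤ (F.card : ℝ) * ((D : ℝ) / ε) := by
      apply mul_le_mul_of_nonneg_right hF
      positivity
    have h2 : ε * S.card * ((D : ℝ) / ε) = (S.card : ℝ) * D := by
      field_simp
    linarith
  linarith
end

section
/- Let G be a bipartite graph with left set {0,1}^n that is a (2^k·ε, 2^k·ε)-expander with left degree D. Then for every set S of at most 2^k left vertices, all but fewer than ε·2^k vertices x ∈ S have some neighbor p such that p has at most D/ε neighbors in S (the 'low-congestion' property). -/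
open Classical in
/-- let `G` be a bipartite graph with left set `{0,1}^n` and left degree at
most `D` which is a `(2^k·ε, 2^k·ε)`-expander.  Then for every set `S` of at most `2^k` left
vertices, all but fewer than `ε·2^k` vertices `x ∈ S` have some neighbor `p` having at most
`D/ε` neighbors in `S` (the low-congestion property); i.e. fewer than `ε·2^k` vertices of
`S` have only neighbors with more than `D/ε` neighbors in `S`. -/
theorem stmt16 (n k : ℕ) {R : Type*} [DecidableEq R]
    (N : (Fin n → Bool) → Finset R) (D : ℕ) (hdeg : ∀ x, (N x).card ≤ D)
    (ε : ℝ) (hε : 0 < ε)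
    (hexp : ∀ T : Finset (Fin n → Bool), T.card = ⌈(2 ^ k : ℝ) * ε⌉₊ →
        (2 ^ k : ℝ) * ε ≤ ((T.biUnion N).card : ℝ)) :
    ∀ S : Finset (Fin n → Bool), S.card ≤ 2 ^ k →
      (((S.filter fun x => ∀ p ∈ N x,
          (D : ℝ) / ε < ((S.filter fun y => p ∈ N y).card : ℝ)).card : ℝ))
        < ε * 2 ^ k := by
  intro S hS
  by_contra h
  push_neg at h
  set B := S.filter fun x => ∀ p ∈ N x,
      (D : ℝ) / ε < ((S.filter fun y => p ∈ N y).card : ℝ) with hBdef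
  have hBcard : ⌈(2 ^ k : ℝ) * ε⌉₊ ≤ B.card := by
    rw [Nat.ceil_le]
    calc (2 ^ k : ℝ) * ε = ε * 2 ^ k := by ring
      _ ≤ (B.card : ℝ) := h
  obtain ⟨T, hTB, hTcard⟩ := Finset.exists_subset_card_eq hBcard
  have hUlb := hexp T hTcard
  set U := T.biUnion N with hUdef
  have hfat : ∀ p ∈ U, (D : ℝ) / ε < ((S.filter fun y => p ∈ N y).card : ℝ) := by
    intro p hp
    obtain ⟨x, hxT, hpx⟩ := Finset.mem_biUnion.mp hp
    exact (Finset.mem_filter.mp (hTB hxT)).2 p hpx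
  have hpos : (0 : ℝ) < (2 ^ k : ℝ) * ε := by positivity
  have hUne : U.Nonempty := by
    rcases U.eq_empty_or_nonempty with he | hn
    · rw [he] at hUlb; simp at hUlb; linarith
    · exact hn
  -- double counting: upper bound on the sum
  have e1 : ∑ p ∈ U, ((S.filter fun y => p ∈ N y).card) =
      ∑ y ∈ S, ((U.filter fun p => p ∈ N y).card) := by
    simp only [Finset.card_filter]
    rw [Finset.sum_comm]
  have e2 : ∑ y ∈ S, ((U.filter fun p => p ∈ N y).card) ≤ 2 ^ k * D := by
    calc ∑ y ∈ S, ((U.filter fun p => p ∈ N y).card)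
        ≤ ∑ y ∈ S, D := by
          apply Finset.sum_le_sum
          intro y _
          exact le_trans (Finset.card_le_card
            (fun p hp => (Finset.mem_filter.mp hp).2)) (hdeg y)
      _ = S.card * D := by rw [Finset.sum_const, smul_eq_mul]
      _ ≤ 2 ^ k * D := Nat.mul_le_mul_right D hS
  have hupper : ∑ p ∈ U, ((S.filter fun y => p ∈ N y).card : ℝ) ≤ (2 ^ k : ℝ) * D := by
    have : ((∑ p ∈ U, (S.filter fun y => p ∈ N y).card : ℕ) : ℝ) ≤ ((2 ^ k * D : ℕ) : ℝ) := by
      exact_mod_cast e1 ▸ e2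
    push_cast at this
    exact_mod_cast this
  -- lower bound on the sum
  have hlower : (U.card : ℝ) * ((D : ℝ) / ε) <
      ∑ p ∈ U, ((S.filter fun y => p ∈ N y).card : ℝ) := by
    have := Finset.sum_lt_sum_of_nonempty hUne hfat
    simpa [Finset.sum_const, mul_comm] using this
  have hdive : (0 : ℝ) ≤ (D : ℝ) / ε := by positivity
  have h3 : (2 ^ k : ℝ) * ε * ((D : ℝ) / ε) ≤ (U.card : ℝ) * ((D : ℝ) / ε) :=
    mul_le_mul_of_nonneg_right hUlb hdive
  have h4 : (2 ^ k : ℝ) * ε * ((D : ℝ) / ε) = (2 ^ k : ℝ) * D := by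
    field_simp
  linarith
end

section
/- For every set W of d binary strings of length n and every x ∈ W, there is a prime q ≤ 4dn^2 such that x is not congruent to x' modulo q for every x' ∈ W with x' ≠ x (identifying binary strings with the natural numbers they represent). -/
private lemma stmt17_aux_chebyshev (m K : ℕ) (hm : 4 ≤ m)
    (hK : ((2 * m).succ.primesBelow).card ≤ K) : 4 ^ m < (2 * m) ^ (K + 1) := by
  have hcb : Nat.centralBinom m ≠ 0 := (Nat.centralBinom_pos m).ne'
  have h1 : Nat.centralBinom m ≤ (2 * m) ^ ((Nat.centralBinom m).primeFactors.card) := by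
    conv_lhs => rw [← Nat.factorization_prod_pow_eq_self hcb]
    rw [Nat.prod_factorization_eq_prod_primeFactors]
    calc ∏ p ∈ (Nat.centralBinom m).primeFactors, p ^ (Nat.centralBinom m).factorization p
        ≤ ∏ _p ∈ (Nat.centralBinom m).primeFactors, 2 * m := by
          apply Finset.prod_le_prod (fun _ _ => Nat.zero_le _)
          intro p _
          exact Nat.pow_factorization_choose_le (by omega)
      _ = (2 * m) ^ ((Nat.centralBinom m).primeFactors.card) := by
          rw [Finset.prod_const]
  have hsub : (Nat.centralBinom m).primeFactors ⊆ (2 * m).succ.primesBelow := by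
    intro p hp
    have hpp := Nat.prime_of_mem_primeFactors hp
    have hpos : 0 < (Nat.centralBinom m).factorization p :=
      (hpp.factorization_pos_of_dvd hcb (Nat.dvd_of_mem_primeFactors hp))
    have := Nat.le_two_mul_of_factorization_centralBinom_pos hpos
    exact Nat.mem_primesBelow.mpr ⟨by omega, hpp⟩
  have hcard : (Nat.centralBinom m).primeFactors.card ≤ K :=
    le_trans (Finset.card_le_card hsub) hK
  calc 4 ^ m < m * Nat.centralBinom m := Nat.four_pow_lt_mul_centralBinom m hm
    _ ≤ (2 * m) * (2 * m) ^ ((Nat.centralBinom m).primeFactors.card) := by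
        exact Nat.mul_le_mul (by omega) h1
    _ ≤ (2 * m) * (2 * m) ^ K := by
        exact Nat.mul_le_mul_left _ (Nat.pow_le_pow_right (by omega) hcard)
    _ = (2 * m) ^ (K + 1) := by ring

/-- for every set `W` of `d` binary strings of length `n ≥ 1` (identified with
the natural numbers below `2^n` they represent) and every `x ∈ W`, there is a prime
`q ≤ 4dn²` such that `x` is not congruent to `x'` modulo `q` for every `x' ∈ W`, `x' ≠ x`. -/
theorem stmt17 (n d : ℕ) (hn : 1 ≤ n) (W : Finset ℕ) (hW : W.card = d)
    (hWn : ∀ x ∈ W, x < 2 ^ n) :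
    ∀ x ∈ W, ∃ q : ℕ, q.Prime ∧ q ≤ 4 * d * n ^ 2 ∧
      ∀ x' ∈ W, x' ≠ x → ¬ x ≡ x' [MOD q] := by
  intro x hx
  have hd1 : 1 ≤ d := hW ▸ Finset.card_pos.mpr ⟨x, hx⟩
  -- case n = 1
  rcases eq_or_lt_of_le hn with hn1 | hn2
  · refine ⟨2, Nat.prime_two, by nlinarith, ?_⟩
    intro x' hx' hne hmod
    have h1 : x < 2 := by simpa [← hn1] using hWn x hx
    have h2 : x' < 2 := by simpa [← hn1] using hWn x' hx'
    have := hmod.symm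
    unfold Nat.ModEq at this
    omega
  -- main case n ≥ 2
  obtain ⟨e, rfl⟩ : ∃ e, d = e + 1 := ⟨d - 1, by omega⟩
  by_contra hcon
  push_neg at hcon
  set N := 4 * (e + 1) * n ^ 2 with hN
  -- every prime ≤ N divides some difference
  set B := W.erase x with hB
  have hBcard : B.card = e := by rw [hB, Finset.card_erase_of_mem hx, hW, Nat.add_sub_cancel]
  set f : ℕ → ℕ := fun x' => max x x' - min x x' with hf
  have hfpos : ∀ x' ∈ B, 1 ≤ f x' ∧ f x' < 2 ^ n := by
    intro x' hx'
    have hne : x' ≠ x := Finset.ne_of_mem_erase hx'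
    have h1 := hWn x hx
    have h2 := hWn x' (Finset.mem_of_mem_erase hx')
    simp only [hf]
    omega
  have hsub : N.succ.primesBelow ⊆ B.biUnion (fun x' => (f x').primeFactors) := by
    intro q hq
    have hqp := Nat.prime_of_mem_primesBelow hq
    have hqN : q ≤ N := by have := Nat.lt_of_mem_primesBelow hq; omega
    obtain ⟨x', hx'W, hne, hmod⟩ := hcon q hqp hqN
    refine Finset.mem_biUnion.mpr ⟨x', Finset.mem_erase.mpr ⟨hne, hx'W⟩, ?_⟩
    have hdvd : q ∣ f x' := by
      rcases le_total x x' with h | h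
      · have := (Nat.modEq_iff_dvd' h).mp hmod
        simpa [hf, max_eq_right h, min_eq_left h] using this
      · have := (Nat.modEq_iff_dvd' h).mp hmod.symm
        simpa [hf, max_eq_left h, min_eq_right h] using this
    have := hfpos x' (Finset.mem_erase.mpr ⟨hne, hx'W⟩)
    exact Nat.mem_primeFactors.mpr ⟨hqp, hdvd, by omega⟩
  have hcnt : ∀ x' ∈ B, (f x').primeFactors.card ≤ n := by
    intro x' hx'
    obtain ⟨h1, h2⟩ := hfpos x' hx'
    by_contra hgt
    push_neg at hgt
    have h3 : 2 ^ (f x').primeFactors.card ≤ ∏ p ∈ (f x').primeFactors, p := by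
      apply Finset.pow_card_le_prod
      intro p hp
      exact (Nat.prime_of_mem_primeFactors hp).two_le
    have h4 : ∏ p ∈ (f x').primeFactors, p ≤ f x' :=
      Nat.le_of_dvd (by omega) (Nat.prod_primeFactors_dvd _)
    have h5 : 2 ^ n < 2 ^ (f x').primeFactors.card :=
      Nat.pow_lt_pow_right (by norm_num) hgt
    omega
  have hK : (N.succ.primesBelow).card ≤ e * n := by
    calc (N.succ.primesBelow).card ≤ (B.biUnion (fun x' => (f x').primeFactors)).card :=
          Finset.card_le_card hsub
      _ ≤ ∑ x' ∈ B, (f x').primeFactors.card := Finset.card_biUnion_le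
      _ ≤ ∑ _x' ∈ B, n := Finset.sum_le_sum hcnt
      _ = e * n := by rw [Finset.sum_const, smul_eq_mul, hBcard]
  -- Chebyshev bound with m = 2 d n², N = 2 m
  set m := 2 * (e + 1) * n ^ 2 with hm
  have hm4 : 4 ≤ m := by rw [hm]; nlinarith
  have hNm : N = 2 * m := by rw [hN, hm]; ring
  have hcheb := stmt17_aux_chebyshev m (e * n) hm4 (by rw [← hNm]; exact hK)
  -- size bounds: d ≤ 2^n, n ≤ 2^(n-1)
  have hdle : e + 1 ≤ 2 ^ n := by
    rw [← hW]
    calc W.card ≤ (Finset.range (2 ^ n)).card :=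
          Finset.card_le_card (fun y hy => Finset.mem_range.mpr (hWn y hy))
      _ = 2 ^ n := Finset.card_range _
  have hnle : n ≤ 2 ^ (n - 1) := by
    have := Nat.lt_two_pow_self (n := n - 1)
    omega
  have h2m : 2 * m ≤ 2 ^ (3 * n) := by
    have hn2le : n ^ 2 ≤ 2 ^ (2 * n - 2) := by
      calc n ^ 2 ≤ (2 ^ (n - 1)) ^ 2 := Nat.pow_le_pow_left hnle 2
        _ = 2 ^ (2 * n - 2) := by rw [← pow_mul]; congr 1; omega
    calc 2 * m = 4 * (e + 1) * n ^ 2 := by rw [hm]; ring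
      _ ≤ 4 * 2 ^ n * 2 ^ (2 * n - 2) := by
          exact Nat.mul_le_mul (Nat.mul_le_mul_left 4 hdle) hn2le
      _ = 2 ^ (2 + n + (2 * n - 2)) := by rw [pow_add, pow_add]; norm_num
      _ = 2 ^ (3 * n) := by congr 1; omega
  have hfinal : 2 ^ (2 * m) < 2 ^ (3 * n * (e * n + 1)) := by
    calc 2 ^ (2 * m) = 4 ^ m := by rw [pow_mul]; norm_num
      _ < (2 * m) ^ (e * n + 1) := hcheb
      _ ≤ (2 ^ (3 * n)) ^ (e * n + 1) := Nat.pow_le_pow_left h2m _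
      _ = 2 ^ (3 * n * (e * n + 1)) := by rw [← pow_mul]
  have hexp : 2 * m < 3 * n * (e * n + 1) :=
    (Nat.pow_lt_pow_iff_right (by norm_num)).mp hfinal
  rw [hm] at hexp
  nlinarith [hexp, hn2]
end

section
/- Let G be the union over all k of graphs H_k, where H_k has left set {0,1}^{≥ k-1}, right set {0,1}^{k+3}×{0,1}^2 (disjoint across k), is a (2^{k-1}, 2^{k+1})-expander, and has left degree O(|x|) at each left vertex x. Then G has left degree O(|x|^2) at each left vertex x, and admits on-line matching with constant overhead: for any on-line sequence of requests (x, k) containing at most 2^k requests with second component k for each k, each request (x,k) can be irrevocably assigned a neighbor p(x,k) of x of length at most k + O(1), with distinct first components receiving distinct right vertices. -/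
/-- The responses of an on-line strategy `σ` along a sequence of requests: the response to
each request may depend only on the history of previous requests. -/
def respond {L R : Type*} (σ : List L → L → Option R) :
    List L → List L → List (Option R)
  | _, [] => []
  | hist, x :: xs => σ hist x :: respond σ (hist ++ [x]) xs

/-- The right vertex set of `H_k` is `{0,1}^{k+3} × {0,1}^2`; the union over `k` of these
pairwise disjoint right sets is the sigma type. -/
abbrev RightVert : Type := Σ k : ℕ, (Fin (k + 3) → Bool) × (Fin 2 → Bool)

/-- The neighborhood of a left vertex `x` (a binary string) in the union graph `G` of the
graphs `H_k`: the union of its neighborhoods in the graphs `H_k` with `k - 1 ≤ |x|`. -/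
def unionNbhd (N : (k : ℕ) → List Bool → Finset ((Fin (k + 3) → Bool) × (Fin 2 → Bool)))
    (x : List Bool) : Finset RightVert :=
  (Finset.range (x.length + 2)).biUnion
    fun k => (N k x).map ⟨Sigma.mk k, sigma_mk_injective⟩

namespace Stmt19

abbrev Nbhd := (k : ℕ) → List Bool → Finset ((Fin (k + 3) → Bool) × (Fin 2 → Bool))

structure Ent where
  x : List Bool
  k : ℕ
  e : ℕ
  p : RightVert

variable (N : Nbhd)

/-- vertices of `N j x` still unused given trace `T`. -/
def avail (j : ℕ) (x : List Bool) (T : List Ent) :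
    Finset ((Fin (j + 3) → Bool) × (Fin 2 → Bool)) :=
  (N j x).filter fun v => (⟨j, v⟩ : RightVert) ∉ T.map Ent.p

noncomputable def freshStep (T : List Ent) (x : List Bool) (k : ℕ) :
    List Ent × Option RightVert :=
  if h : ∃ j, j ≤ min k (x.length + 1) ∧ (avail N j x T).Nonempty then
    (⟨x, k, min k (x.length + 1),
       ⟨Nat.findGreatest (fun j => (avail N j x T).Nonempty) (min k (x.length + 1)),
        (Nat.findGreatest_spec (P := fun j => (avail N j x T).Nonempty) h.choose_spec.1 h.choose_spec.2).choose⟩⟩ :: T,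
     some ⟨Nat.findGreatest (fun j => (avail N j x T).Nonempty) (min k (x.length + 1)),
        (Nat.findGreatest_spec (P := fun j => (avail N j x T).Nonempty) h.choose_spec.1 h.choose_spec.2).choose⟩)
  else (T, none)

noncomputable def step (T : List Ent) (r : List Bool × ℕ) : List Ent × Option RightVert :=
  match T.find? (fun en => decide (en.x = r.1)) with
  | some en0 => if en0.p.1 ≤ r.2 then (T, some en0.p) else freshStep N T r.1 r.2
  | none => freshStep N T r.1 r.2

noncomputable def runState (hist : List (List Bool × ℕ)) : List Ent :=
  hist.foldl (fun T r => (step N T r).1) []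

noncomputable def strat (hist : List (List Bool × ℕ)) (r : List Bool × ℕ) :
    Option RightVert :=
  (step N (runState N hist) r).2

theorem freshStep_spec (T : List Ent) (x : List Bool) (k : ℕ) :
    (∃ j v, j ≤ min k (x.length + 1) ∧ v ∈ avail N j x T ∧
      (∀ j', j < j' → j' ≤ min k (x.length + 1) → avail N j' x T = ∅) ∧
      freshStep N T x k =
        (⟨x, k, min k (x.length + 1), ⟨j, v⟩⟩ :: T, some ⟨j, v⟩)) ∨
    ((∀ j ≤ min k (x.length + 1), avail N j x T = ∅) ∧
      freshStep N T x k = (T, none)) := by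
  by_cases h : ∃ j, j ≤ min k (x.length + 1) ∧ (avail N j x T).Nonempty
  · left
    refine ⟨Nat.findGreatest (fun j => (avail N j x T).Nonempty) (min k (x.length + 1)),
      (Nat.findGreatest_spec (P := fun j => (avail N j x T).Nonempty) h.choose_spec.1 h.choose_spec.2).choose,
      Nat.findGreatest_le _,
      (Nat.findGreatest_spec (P := fun j => (avail N j x T).Nonempty) h.choose_spec.1 h.choose_spec.2).choose_spec, ?_, ?_⟩
    · intro j' hj1 hj2
      have := Nat.findGreatest_is_greatest (P := fun j => (avail N j x T).Nonempty) hj1 hj2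
      exact Finset.not_nonempty_iff_eq_empty.1 this
    · rw [freshStep, dif_pos h]
  · right
    refine ⟨?_, by rw [freshStep, dif_neg h]⟩
    intro j hj
    by_contra hne
    exact h ⟨j, hj, Finset.nonempty_iff_ne_empty.2 hne⟩

structure Inv (hist : List (List Bool × ℕ)) (T : List Ent) : Prop where
  mem_hist : ∀ en ∈ T, (en.x, en.k) ∈ hist
  he : ∀ en ∈ T, en.e = min en.k (en.x.length + 1)
  hpe : ∀ en ∈ T, en.p.1 ≤ en.e
  hpmem : ∀ en ∈ T, en.p.2 ∈ N en.p.1 en.x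
  rej : ∀ en ∈ T, ∀ j, en.p.1 < j → j ≤ en.e →
    ∀ v ∈ N j en.x, (⟨j, v⟩ : RightVert) ∈ T.map Ent.p
  nodup : (T.map Ent.p).Nodup
  chain : T.Pairwise fun a b => a.x = b.x → a.e < b.p.1

theorem inv_nil : Inv N [] [] := by
  constructor <;> simp

theorem find?_first {T : List Ent} {en0 : Ent} {q : Ent → Bool}
    {R : Ent → Ent → Prop} (hp : T.Pairwise R) (hf : T.find? q = some en0) :
    ∀ b ∈ T, q b → b = en0 ∨ R en0 b := by
  induction T with
  | nil => simp at hf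
  | cons a T ih =>
    intro b hb hqb
    by_cases hqa : q a
    · rw [List.find?_cons_of_pos hqa] at hf
      obtain rfl : a = en0 := by simpa using hf
      rcases List.mem_cons.1 hb with rfl | hb
      · exact Or.inl rfl
      · exact Or.inr ((List.pairwise_cons.1 hp).1 b hb)
    · rw [List.find?_cons_of_neg hqa] at hf
      rcases List.mem_cons.1 hb with rfl | hb
      · exact absurd hqb hqa
      · exact ih (List.pairwise_cons.1 hp).2 hf b hb hqb

theorem fresh_inv {hist : List (List Bool × ℕ)} {T : List Ent} (inv : Inv N hist T)
    (x : List Bool) (k : ℕ)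
    (hfresh : ∀ b ∈ T, b.x = x → min k (x.length + 1) < b.p.1) :
    Inv N (hist ++ [(x, k)]) (freshStep N T x k).1 := by
  have base : Inv N (hist ++ [(x, k)]) T :=
    { inv with mem_hist := fun en hen => List.mem_append_left _ (inv.mem_hist en hen) }
  rcases freshStep_spec N T x k with ⟨j, v, hj, hv, hmax, heq⟩ | ⟨_, heq⟩
  · rw [heq]
    have hvN : v ∈ N j x := (Finset.mem_filter.1 hv).1
    have hvU : (⟨j, v⟩ : RightVert) ∉ T.map Ent.p := by
      have := (Finset.mem_filter.1 hv).2
      simpa using this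
    constructor
    · intro en hen
      rcases List.mem_cons.1 hen with rfl | hen
      · exact List.mem_append_right _ (by simp)
      · exact List.mem_append_left _ (inv.mem_hist en hen)
    · intro en hen
      rcases List.mem_cons.1 hen with rfl | hen
      · rfl
      · exact inv.he en hen
    · intro en hen
      rcases List.mem_cons.1 hen with rfl | hen
      · exact hj
      · exact inv.hpe en hen
    · intro en hen
      rcases List.mem_cons.1 hen with rfl | hen
      · exact hvN
      · exact inv.hpmem en hen
    · intro en hen j' hj1 hj2
      rcases List.mem_cons.1 hen with rfl | hen
      · intro v' hv'
        have hav : avail N j' x T = ∅ := hmax j' hj1 hj2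
        have : (⟨j', v'⟩ : RightVert) ∈ T.map Ent.p := by
          by_contra hc
          have : v' ∈ avail N j' x T := Finset.mem_filter.2 ⟨hv', by simpa using hc⟩
          rw [hav] at this; simp at this
        exact List.mem_cons_of_mem _ this
      · intro v' hv'
        exact List.mem_cons_of_mem _ (inv.rej en hen j' hj1 hj2 v' hv')
    · rw [List.map_cons, List.nodup_cons]
      exact ⟨hvU, inv.nodup⟩
    · rw [List.pairwise_cons]
      refine ⟨?_, inv.chain⟩
      intro b hb hxb
      exact hfresh b hb hxb.symm
  · rw [heq]; exact base

theorem step_inv {hist : List (List Bool × ℕ)} {T : List Ent} (inv : Inv N hist T)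
    (r : List Bool × ℕ) : Inv N (hist ++ [r]) (step N T r).1 := by
  have base : Inv N (hist ++ [r]) T :=
    { inv with mem_hist := fun en hen => List.mem_append_left _ (inv.mem_hist en hen) }
  obtain ⟨x, k⟩ := r
  rw [step]
  cases hf : T.find? (fun en => decide (en.x = x)) with
  | some en0 =>
    simp only
    split_ifs with hle
    · exact base
    · apply fresh_inv N inv
      intro b hb hbx
      have hen0T : en0 ∈ T := List.mem_of_find?_eq_some hf
      have hen0x : en0.x = x := by have := List.find?_some hf; simpa using this
      have hfirst := find?_first inv.chain hf b hb (by simp [hbx])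
      rcases hfirst with rfl | hR
      · omega
      · have h1 : en0.e < b.p.1 := hR (hen0x.trans hbx.symm)
        have h2 : en0.p.1 ≤ en0.e := inv.hpe en0 hen0T
        omega
  | none =>
    simp only
    apply fresh_inv N inv
    intro b hb hbx
    have := List.find?_eq_none.1 hf b hb
    simp [hbx] at this

theorem step_sublist (T : List Ent) (r : List Bool × ℕ) : T.Sublist (step N T r).1 := by
  obtain ⟨x, k⟩ := r
  have hfs : T.Sublist (freshStep N T x k).1 := by
    rcases freshStep_spec N T x k with ⟨j, v, _, _, _, heq⟩ | ⟨_, heq⟩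
    · rw [heq]; exact List.sublist_cons_self _ _
    · rw [heq]
  rw [step]
  cases hf : T.find? (fun en => decide (en.x = x)) with
  | some en0 =>
    simp only
    split_ifs with hle
    · exact List.Sublist.refl T
    · exact hfs
  | none => exact hfs

theorem runState_snoc (hist : List (List Bool × ℕ)) (r : List Bool × ℕ) :
    runState N (hist ++ [r]) = (step N (runState N hist) r).1 := by
  rw [runState, runState, List.foldl_append]
  rfl

theorem runState_inv (hist : List (List Bool × ℕ)) : Inv N hist (runState N hist) := by
  induction hist using List.reverseRecOn with
  | nil => exact inv_nil N
  | append_singleton hist r ih =>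
    rw [runState_snoc]
    exact step_inv N ih r

theorem runState_sublist : ∀ (l hist : List (List Bool × ℕ)),
    (runState N hist).Sublist (runState N (hist ++ l))
  | [], hist => by simp
  | r :: l, hist => by
    have h1 := step_sublist N (runState N hist) r
    rw [← runState_snoc] at h1
    have h2 := runState_sublist l (hist ++ [r])
    rw [List.append_assoc] at h2
    exact h1.trans (by simpa using h2)

theorem mem_unionNbhd_of_ent {hist : List (List Bool × ℕ)} {T : List Ent}
    (inv : Inv N hist T) {en : Ent} (h : en ∈ T) : en.p ∈ unionNbhd N en.x := by
  have h1 := inv.hpmem en h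
  have h2 := inv.hpe en h
  have h3 := inv.he en h
  rw [unionNbhd, Finset.mem_biUnion]
  refine ⟨en.p.1, Finset.mem_range.2 (by omega), ?_⟩
  rw [Finset.mem_map]
  exact ⟨en.p.2, h1, Sigma.eta _⟩

theorem countP_and_split {α : Type*} (l : List α) (p q : α → Bool) :
    l.countP p = l.countP (fun a => p a && q a) + l.countP (fun a => p a && !q a) := by
  induction l with
  | nil => simp
  | cons a l ih =>
    by_cases hp : p a <;> by_cases hq : q a <;>
      simp [List.countP_cons, hp, hq, ih] <;> omega

theorem nodup_filter_x {T : List Ent}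
    (chain : T.Pairwise fun a b => a.x = b.x → a.e < b.p.1) (P : Ent → Bool)
    (hP : ∀ a ∈ T, ∀ b ∈ T, P a → P b → a.x = b.x → a.e < b.p.1 → False) :
    ((T.filter P).map Ent.x).Nodup := by
  have h1 : (T.filter P).Pairwise fun a b => a.x ≠ b.x := by
    refine List.Pairwise.imp_of_mem ?_ (chain.filter P)
    intro a b ha hb hR hxx
    exact hP a (List.mem_of_mem_filter ha) b (List.mem_of_mem_filter hb)
      (List.of_mem_filter ha) (List.of_mem_filter hb) hxx (hR hxx)
  have : ((T.filter P).map Ent.x).Pairwise (· ≠ ·) := List.pairwise_map.2 h1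
  exact this

theorem card_union_ite {S : Finset (List Bool)} {x : List Bool} {c : Prop} [Decidable c]
    (hx : c → x ∉ S) :
    (S ∪ if c then {x} else ∅).card = S.card + (if c then 1 else 0) := by
  split_ifs with h
  · rw [Finset.union_comm, ← Finset.insert_eq, Finset.card_insert_of_notMem (hx h)]
  · simp

theorem card_xs {T : List Ent} (P : Ent → Bool) (hnd : ((T.filter P).map Ent.x).Nodup) :
    ((T.filter P).map Ent.x).toFinset.card = T.countP P := by
  rw [List.toFinset_card_of_nodup hnd, List.length_map, List.countP_eq_length_filter]

theorem card_len_strings (S : Finset (List Bool)) (m : ℕ) (h : ∀ y ∈ S, y.length = m) :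
    S.card ≤ 2 ^ m := by
  classical
  have h2 : S.card ≤ (Finset.univ : Finset (Fin m → Bool)).card := by
    apply Finset.card_le_card_of_injOn (fun y => fun i : Fin m => y.getD i false)
      (fun y _ => Finset.mem_univ _)
    intro a ha b hb hfe
    have ha' := h a ha
    have hb' := h b hb
    apply List.ext_getElem (by omega)
    intro i h1 h2
    have h3 : i < m := by omega
    have h4 := congrFun hfe ⟨i, h3⟩
    simp only at h4
    rwa [List.getD_eq_getElem a false (by omega), List.getD_eq_getElem b false (by omega)] at h4
  simpa using h2

def rejP (j : ℕ) (en : Ent) : Bool := decide (en.p.1 < j) && decide (j ≤ en.e)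
def visP (j : ℕ) (en : Ent) : Bool := decide (en.p.1 ≤ j) && decide (j ≤ en.e)

def Rset (T : List Ent) (x : List Bool) (e j : ℕ) : Finset (List Bool) :=
  ((T.filter (rejP j)).map Ent.x).toFinset ∪ (if j ≤ e then {x} else ∅)

theorem no_fail
    (hexp : ∀ k, ∀ S : Finset (List Bool),
        (∀ x ∈ S, k - 1 ≤ x.length) → S.card = 2 ^ (k - 1) →
        2 ^ (k + 1) ≤ (S.biUnion (N k)).card)
    {hist : List (List Bool × ℕ)} {T : List Ent} (inv : Inv N hist T)
    {rs : List (List Bool × ℕ)} {x : List Bool} {k : ℕ}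
    (hpre : (hist ++ [(x, k)]) <+: rs) (hnd : rs.Nodup)
    (hcnt : ∀ j, rs.countP (fun r => decide (r.2 = j)) ≤ 2 ^ j)
    (hfresh : ∀ b ∈ T, b.x = x → min k (x.length + 1) < b.p.1)
    (habs : ∀ j, j ≤ min k (x.length + 1) → avail N j x T = ∅) :
    False := by
  classical
  set e := min k (x.length + 1) with he_def
  have hxk_rs : (x, k) ∈ rs := hpre.subset (by simp)
  have h_nodupR : ∀ j, ((T.filter (rejP j)).map Ent.x).Nodup := by
    intro j
    apply nodup_filter_x inv.chain
    intro a ha b hb hpa hpb hxx hlt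
    simp only [rejP, Bool.and_eq_true, decide_eq_true_eq] at hpa hpb
    omega
  have hxnotinR : ∀ j, j ≤ e → x ∉ ((T.filter (rejP j)).map Ent.x).toFinset := by
    intro j hj hmem
    rw [List.mem_toFinset, List.mem_map] at hmem
    obtain ⟨en, henf, hx⟩ := hmem
    rw [List.mem_filter] at henf
    obtain ⟨henT, hr⟩ := henf
    simp only [rejP, Bool.and_eq_true, decide_eq_true_eq] at hr
    have := hfresh en henT hx
    omega
  have card_Rset : ∀ j, (Rset T x e j).card =
      T.countP (rejP j) + (if j ≤ e then 1 else 0) := by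
    intro j
    rw [Rset, card_union_ite (hxnotinR j), card_xs _ (h_nodupR j)]
  have lowb : ∀ j, 2 ^ (j - 1) ≤ (Rset T x e j).card →
      2 ^ (j + 1) + T.countP (rejP j) ≤ T.countP (visP j) := by
    intro j hcard
    obtain ⟨S, hSsub, hScard⟩ := Finset.exists_subset_card_eq hcard
    have hSlen : ∀ y ∈ S, j - 1 ≤ y.length := by
      intro y hy
      rcases Finset.mem_union.1 (hSsub hy) with h | h
      · rw [List.mem_toFinset, List.mem_map] at h
        obtain ⟨en, henf, rfl⟩ := h
        rw [List.mem_filter] at henf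
        obtain ⟨henT, hr⟩ := henf
        simp only [rejP, Bool.and_eq_true, decide_eq_true_eq] at hr
        have h1 := inv.he en henT
        omega
      · by_cases hje : j ≤ e
        · rw [if_pos hje] at h
          obtain rfl : y = x := by simpa using h
          omega
        · rw [if_neg hje] at h; simp at h
    have hbig := hexp j S hSlen hScard
    have hsub : (S.biUnion (N j)).map ⟨Sigma.mk j, sigma_mk_injective⟩ ⊆
        ((T.filter (fun en => decide (en.p.1 = j))).map Ent.p).toFinset := by
      intro q hq
      rw [Finset.mem_map] at hq
      obtain ⟨v, hv, rfl⟩ := hq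
      rw [Finset.mem_biUnion] at hv
      obtain ⟨y, hyS, hvN⟩ := hv
      have hmem : (⟨j, v⟩ : RightVert) ∈ T.map Ent.p := by
        rcases Finset.mem_union.1 (hSsub hyS) with h | h
        · rw [List.mem_toFinset, List.mem_map] at h
          obtain ⟨en, henf, rfl⟩ := h
          rw [List.mem_filter] at henf
          obtain ⟨henT, hr⟩ := henf
          simp only [rejP, Bool.and_eq_true, decide_eq_true_eq] at hr
          exact inv.rej en henT j hr.1 hr.2 v hvN
        · by_cases hje : j ≤ e
          · rw [if_pos hje] at h
            obtain rfl : y = x := by simpa using h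
            by_contra hc
            have hav := habs j hje
            have : v ∈ avail N j y T := Finset.mem_filter.2 ⟨hvN, by simpa using hc⟩
            rw [hav] at this
            simp at this
          · rw [if_neg hje] at h; simp at h
      rw [List.mem_map] at hmem
      obtain ⟨en, henT, hpq⟩ := hmem
      rw [List.mem_toFinset, List.mem_map]
      refine ⟨en, List.mem_filter.2 ⟨henT, ?_⟩, hpq⟩
      have h5 : en.p.1 = j := by rw [hpq]
      simpa using h5
    have h1 : 2 ^ (j + 1) ≤ T.countP (fun en => decide (en.p.1 = j)) := by
      calc 2 ^ (j + 1) ≤ (S.biUnion (N j)).card := hbig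
        _ = ((S.biUnion (N j)).map ⟨Sigma.mk j, sigma_mk_injective⟩).card :=
            (Finset.card_map _).symm
        _ ≤ (((T.filter (fun en => decide (en.p.1 = j))).map Ent.p).toFinset).card :=
            Finset.card_le_card hsub
        _ ≤ ((T.filter (fun en => decide (en.p.1 = j))).map Ent.p).length :=
            List.toFinset_card_le _
        _ = T.countP (fun en => decide (en.p.1 = j)) := by
            rw [List.length_map, List.countP_eq_length_filter]
    have hsplit := countP_and_split T (visP j) (fun en => decide (en.p.1 = j))
    have hm1 : T.countP (fun en => decide (en.p.1 = j)) ≤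
        T.countP (fun en => visP j en && decide (en.p.1 = j)) := by
      apply List.countP_mono_left
      intro en hen h
      have h2 := inv.hpe en hen
      simp only [decide_eq_true_eq] at h
      simp only [visP, Bool.and_eq_true, decide_eq_true_eq]
      omega
    have hm2 : T.countP (rejP j) ≤
        T.countP (fun en => visP j en && !decide (en.p.1 = j)) := by
      apply List.countP_mono_left
      intro en hen h
      simp only [rejP, Bool.and_eq_true, decide_eq_true_eq] at h
      simp only [visP, Bool.and_eq_true, Bool.not_eq_true', decide_eq_false_iff_not,
        decide_eq_true_eq]
      omega
    omega
  have upb : ∀ j, T.countP (visP j) + (if j ≤ e then 1 else 0) ≤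
      2 ^ j + 2 ^ (j - 1) + (Rset T x e (j + 1)).card := by
    intro j
    have s1 := countP_and_split T (visP j) (fun en => decide (en.e = j))
    have s2 := countP_and_split T (fun en => visP j en && decide (en.e = j))
        (fun en => decide (en.k = j))
    have m1 : T.countP (fun en => (visP j en && decide (en.e = j)) && decide (en.k = j)) ≤
        T.countP (fun en => decide (en.e = j) && decide (en.k = j)) := by
      apply List.countP_mono_left
      intro en _ h
      revert h
      simp only [visP, Bool.and_eq_true, decide_eq_true_eq]
      tauto
    have m2 : T.countP (fun en => (visP j en && decide (en.e = j)) && !decide (en.k = j)) ≤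
        T.countP (fun en => decide (en.e = j) && !decide (en.k = j)) := by
      apply List.countP_mono_left
      intro en _ h
      revert h
      simp only [visP, Bool.and_eq_true, Bool.not_eq_true', decide_eq_true_eq]
      tauto
    have m3 : T.countP (fun en => visP j en && !decide (en.e = j)) ≤
        T.countP (rejP (j + 1)) := by
      apply List.countP_mono_left
      intro en _ h
      revert h
      simp only [visP, rejP, Bool.and_eq_true, Bool.not_eq_true', decide_eq_true_eq,
        decide_eq_false_iff_not]
      omega
    have t2 : (if j ≤ e then (1 : ℕ) else 0) = (if e = j ∧ k = j then 1 else 0) +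
        (if e = j ∧ k ≠ j then 1 else 0) + (if j + 1 ≤ e then 1 else 0) := by
      split_ifs <;> omega
    have t3 : T.countP (fun en => decide (en.e = j) && decide (en.k = j)) +
        (if e = j ∧ k = j then (1 : ℕ) else 0) ≤ 2 ^ j := by
      set P1 : Ent → Bool := fun en => decide (en.e = j) && decide (en.k = j) with hP1
      have hnd1 : ((T.filter P1).map Ent.x).Nodup := by
        apply nodup_filter_x inv.chain
        intro a ha b hb hpa hpb hxx hlt
        simp only [hP1, Bool.and_eq_true, decide_eq_true_eq] at hpa hpb
        have := inv.hpe b hb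
        omega
      have hxn1 : (e = j ∧ k = j) → x ∉ ((T.filter P1).map Ent.x).toFinset := by
        rintro ⟨hej, hkj⟩ hmem
        rw [List.mem_toFinset, List.mem_map] at hmem
        obtain ⟨en, henf, hxx⟩ := hmem
        rw [List.mem_filter] at henf
        obtain ⟨henT, hr⟩ := henf
        simp only [hP1, Bool.and_eq_true, decide_eq_true_eq] at hr
        have h1 := hfresh en henT hxx
        have h2 := inv.hpe en henT
        omega
      have hcard1 : (((T.filter P1).map Ent.x).toFinset ∪
          (if e = j ∧ k = j then {x} else ∅)).card =
          T.countP P1 + (if e = j ∧ k = j then 1 else 0) := by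
        rw [card_union_ite hxn1, card_xs _ hnd1]
      have hinj : Function.Injective (fun y : List Bool => (y, j)) := by
        intro a b h
        simpa using congrArg Prod.fst h
      have hsubset : ((((T.filter P1).map Ent.x).toFinset ∪
          (if e = j ∧ k = j then {x} else ∅)).image (fun y => (y, j))) ⊆
          (rs.filter (fun r => decide (r.2 = j))).toFinset := by
        intro q hq
        rw [Finset.mem_image] at hq
        obtain ⟨y, hy, rfl⟩ := hq
        rw [List.mem_toFinset, List.mem_filter]
        rcases Finset.mem_union.1 hy with h | h
        · rw [List.mem_toFinset, List.mem_map] at h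
          obtain ⟨en, henf, rfl⟩ := h
          rw [List.mem_filter] at henf
          obtain ⟨henT, hr⟩ := henf
          simp only [hP1, Bool.and_eq_true, decide_eq_true_eq] at hr
          have h6 := inv.mem_hist en henT
          constructor
          · rw [← hr.2]
            exact hpre.subset (List.mem_append_left _ h6)
          · simp
        · by_cases hc : e = j ∧ k = j
          · rw [if_pos hc] at h
            obtain rfl : y = x := by simpa using h
            constructor
            · rw [← hc.2]; exact hxk_rs
            · simp
          · rw [if_neg hc] at h; simp at h
      rw [← hcard1]
      calc (((T.filter P1).map Ent.x).toFinset ∪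
          (if e = j ∧ k = j then {x} else ∅)).card
          = ((((T.filter P1).map Ent.x).toFinset ∪
            (if e = j ∧ k = j then {x} else ∅)).image (fun y => (y, j))).card :=
            (Finset.card_image_of_injective _ hinj).symm
        _ ≤ (rs.filter (fun r => decide (r.2 = j))).toFinset.card :=
            Finset.card_le_card hsubset
        _ ≤ (rs.filter (fun r => decide (r.2 = j))).length := List.toFinset_card_le _
        _ = rs.countP (fun r => decide (r.2 = j)) :=
            List.countP_eq_length_filter.symm
        _ ≤ 2 ^ j := hcnt j
    have t4 : T.countP (fun en => decide (en.e = j) && !decide (en.k = j)) +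
        (if e = j ∧ k ≠ j then (1 : ℕ) else 0) ≤ 2 ^ (j - 1) := by
      set P2 : Ent → Bool := fun en => decide (en.e = j) && !decide (en.k = j) with hP2
      have hnd2 : ((T.filter P2).map Ent.x).Nodup := by
        apply nodup_filter_x inv.chain
        intro a ha b hb hpa hpb hxx hlt
        simp only [hP2, Bool.and_eq_true, Bool.not_eq_true', decide_eq_true_eq,
          decide_eq_false_iff_not] at hpa hpb
        have := inv.hpe b hb
        omega
      have hxn2 : (e = j ∧ k ≠ j) → x ∉ ((T.filter P2).map Ent.x).toFinset := by
        rintro ⟨hej, hkj⟩ hmem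
        rw [List.mem_toFinset, List.mem_map] at hmem
        obtain ⟨en, henf, hxx⟩ := hmem
        rw [List.mem_filter] at henf
        obtain ⟨henT, hr⟩ := henf
        simp only [hP2, Bool.and_eq_true, Bool.not_eq_true', decide_eq_true_eq,
          decide_eq_false_iff_not] at hr
        have h1 := hfresh en henT hxx
        have h2 := inv.hpe en henT
        omega
      have hcard2 : (((T.filter P2).map Ent.x).toFinset ∪
          (if e = j ∧ k ≠ j then {x} else ∅)).card =
          T.countP P2 + (if e = j ∧ k ≠ j then 1 else 0) := by
        rw [card_union_ite hxn2, card_xs _ hnd2]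
      have hlen2 : ∀ y ∈ (((T.filter P2).map Ent.x).toFinset ∪
          (if e = j ∧ k ≠ j then {x} else ∅)), y.length = j - 1 := by
        intro y hy
        rcases Finset.mem_union.1 hy with h | h
        · rw [List.mem_toFinset, List.mem_map] at h
          obtain ⟨en, henf, rfl⟩ := h
          rw [List.mem_filter] at henf
          obtain ⟨henT, hr⟩ := henf
          simp only [hP2, Bool.and_eq_true, Bool.not_eq_true', decide_eq_true_eq,
            decide_eq_false_iff_not] at hr
          have h1 := inv.he en henT
          omega
        · by_cases hc : e = j ∧ k ≠ j
          · rw [if_pos hc] at h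
            obtain rfl : y = x := by simpa using h
            have hc1 := hc.1
            have hc2 := hc.2
            omega
          · rw [if_neg hc] at h; simp at h
      rw [← hcard2]
      exact card_len_strings _ _ hlen2
    rw [card_Rset (j + 1)]
    omega
  have hRB : ∀ j, (T.map Ent.e).sum + e + 1 ≤ j → Rset T x e j = ∅ := by
    intro j hj
    rw [Rset]
    have h1 : T.filter (rejP j) = [] := by
      rw [List.filter_eq_nil_iff]
      intro en hen
      simp only [rejP, Bool.and_eq_true, decide_eq_true_eq, not_and]
      intro _
      have : en.e ≤ (T.map Ent.e).sum :=
        List.single_le_sum (by simp) _ (List.mem_map_of_mem (f := Ent.e) hen)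
      omega
    have h2 : ¬ j ≤ e := by omega
    simp [h1, h2]
  have key : ∀ n j, (T.map Ent.e).sum + e + 1 ≤ j + n →
      (Rset T x e j).card + 1 ≤ 2 ^ (j - 1) := by
    intro n
    induction n with
    | zero =>
      intro j hj
      rw [hRB j (by omega)]
      simpa using Nat.one_le_two_pow
    | succ n ih =>
      intro j hj
      by_cases hBj : (T.map Ent.e).sum + e + 1 ≤ j
      · rw [hRB j hBj]
        simpa using Nat.one_le_two_pow
      · by_contra hcon
        push_neg at hcon
        have hcon' : 2 ^ (j - 1) ≤ (Rset T x e j).card := by omega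
        have h1 := lowb j hcon'
        have h2 := upb j
        have h3 := ih (j + 1) (by omega)
        rw [card_Rset j] at hcon'
        rw [card_Rset (j + 1)] at h2 h3
        have hq : j + 1 - 1 = j := by omega
        rw [hq] at h3
        have hp : (2 : ℕ) ^ (j + 1) = 2 * 2 ^ j := by rw [pow_succ]; ring
        set a := (2 : ℕ) ^ (j - 1)
        set b := (2 : ℕ) ^ j
        set c := (2 : ℕ) ^ (j + 1)
        omega
  have hfin := key ((T.map Ent.e).sum + e + 1) 0 (by omega)
  rw [card_Rset 0] at hfin
  have : (0 : ℕ) ≤ e := Nat.zero_le e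
  simp only [if_pos this] at hfin
  simp at hfin

theorem step_success
    (hexp : ∀ k, ∀ S : Finset (List Bool),
        (∀ x ∈ S, k - 1 ≤ x.length) → S.card = 2 ^ (k - 1) →
        2 ^ (k + 1) ≤ (S.biUnion (N k)).card)
    {hist : List (List Bool × ℕ)} {T : List Ent} (inv : Inv N hist T)
    {rs : List (List Bool × ℕ)} {x : List Bool} {k : ℕ}
    (hpre : (hist ++ [(x, k)]) <+: rs) (hnd : rs.Nodup)
    (hcnt : ∀ j, rs.countP (fun r => decide (r.2 = j)) ≤ 2 ^ j) :
    ∃ en : Ent, (step N T (x, k)).2 = some en.p ∧ en ∈ (step N T (x, k)).1 ∧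
      en.x = x ∧ en.p.1 ≤ k := by
  have hmain : ∀ _ : (∀ b ∈ T, b.x = x → min k (x.length + 1) < b.p.1),
      ∃ en : Ent, (freshStep N T x k).2 = some en.p ∧ en ∈ (freshStep N T x k).1 ∧
        en.x = x ∧ en.p.1 ≤ k := by
    intro hfresh
    rcases freshStep_spec N T x k with ⟨j, v, hj, hv, hmax, heq⟩ | ⟨habs, heq⟩
    · refine ⟨⟨x, k, min k (x.length + 1), ⟨j, v⟩⟩, ?_, ?_, rfl, ?_⟩
      · rw [heq]
      · rw [heq]; exact List.mem_cons_self
      · simpa using le_trans hj (min_le_left _ _)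
    · exact absurd (no_fail N hexp inv hpre hnd hcnt hfresh habs) not_false
  rw [step]
  cases hf : T.find? (fun en => decide (en.x = (x, k).1)) with
  | some en0 =>
    simp only
    split_ifs with hle
    · refine ⟨en0, rfl, List.mem_of_find?_eq_some hf, ?_, hle⟩
      have := List.find?_some hf
      simpa using this
    · apply hmain
      intro b hb hbx
      have hen0T : en0 ∈ T := List.mem_of_find?_eq_some hf
      have hen0x : en0.x = x := by have := List.find?_some hf; simpa using this
      have hfirst := find?_first inv.chain hf b hb (by simp [hbx])
      have hle' : ¬en0.p.1 ≤ k := hle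
      rcases hfirst with rfl | hR
      · omega
      · have h1 : en0.e < b.p.1 := hR (hen0x.trans hbx.symm)
        have h2 : en0.p.1 ≤ en0.e := inv.hpe en0 hen0T
        omega
  | none =>
    simp only
    apply hmain
    intro b hb hbx
    have := List.find?_eq_none.1 hf b hb
    simp [hbx] at this

theorem main_aux
    (hexp : ∀ k, ∀ S : Finset (List Bool),
        (∀ x ∈ S, k - 1 ≤ x.length) → S.card = 2 ^ (k - 1) →
        2 ^ (k + 1) ≤ (S.biUnion (N k)).card)
    (rs : List (List Bool × ℕ)) (hnd : rs.Nodup)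
    (hcnt : ∀ j, rs.countP (fun r => decide (r.2 = j)) ≤ 2 ^ j) :
    ∀ (l hist : List (List Bool × ℕ)), hist ++ l = rs →
      ∀ pr ∈ l.zip (respond (strat N) hist l),
        ∃ (p : RightVert) (en : Ent), pr.2 = some p ∧ p ∈ unionNbhd N pr.1.1 ∧
          p.1 ≤ pr.1.2 ∧ en ∈ runState N rs ∧ en.x = pr.1.1 ∧ en.p = p := by
  intro l
  induction l with
  | nil => intro hist _ pr hpr; simp [respond] at hpr
  | cons r l ih =>
    intro hist heq pr hpr
    rw [show respond (strat N) hist (r :: l) =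
      strat N hist r :: respond (strat N) (hist ++ [r]) l from rfl,
      List.zip_cons_cons] at hpr
    rcases List.mem_cons.1 hpr with rfl | hpr
    · have heq' : (hist ++ [r]) ++ l = rs := by rw [← heq]; simp
      have hpre : (hist ++ [(r.1, r.2)]) <+: rs := ⟨l, by simpa using heq'⟩
      obtain ⟨en, h1, h2, h3, h4⟩ :=
        step_success N hexp (runState_inv N hist) hpre hnd hcnt
      have hr : ((r.1, r.2) : List Bool × ℕ) = r := rfl
      rw [hr] at h1 h2
      have hsnoc : (step N (runState N hist) r).1 = runState N (hist ++ [r]) :=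
        (runState_snoc N hist r).symm
      rw [hsnoc] at h2
      have hinv' := runState_inv N (hist ++ [r])
      refine ⟨en.p, en, h1, ?_, by simpa using h4, ?_, h3, rfl⟩
      · have := mem_unionNbhd_of_ent N hinv' h2
        rwa [h3] at this
      · have hsl := runState_sublist N l (hist ++ [r])
        rw [heq'] at hsl
        exact hsl.subset h2
    · exact ih (hist ++ [r]) (by simpa using heq) pr hpr

end Stmt19

/-- let `G` be the union over `k` of graphs `H_k`, where `H_k` has left vertex
set `{0,1}^{≥ k-1}`, right vertex set `{0,1}^{k+3} × {0,1}^2` (disjoint across `k`), is a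
`(2^{k-1}, 2^{k+1})`-expander, and has left degree `O(|x|)`.  Then `G` has left degree
`O(|x|²)` and admits on-line matching with constant overhead: there is a constant `c` and an
on-line strategy `σ` such that for any sequence of distinct requests `(x, k)` with at most
`2^k` requests of second component `k` (for every `k`), every request `(x, k)` is irrevocably
assigned a neighbor `p` of `x` of length at most `k + c` (a right vertex of `H_j` is a string
of length `j + 5`), and requests with distinct first components receive distinct right
vertices. -/
theorem stmt19
    (N : (k : ℕ) → List Bool → Finset ((Fin (k + 3) → Bool) × (Fin 2 → Bool)))
    (hleft : ∀ k x, x.length + 1 < k → N k x = ∅)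
    (C : ℕ)
    (hdeg : ∀ k x, (N k x).card ≤ C * (x.length + 1))
    (hexp : ∀ k, ∀ S : Finset (List Bool),
        (∀ x ∈ S, k - 1 ≤ x.length) → S.card = 2 ^ (k - 1) →
        2 ^ (k + 1) ≤ (S.biUnion (N k)).card) :
    (∃ C' : ℕ, ∀ x : List Bool, (unionNbhd N x).card ≤ C' * (x.length + 1) ^ 2) ∧
    ∃ (c : ℕ) (σ : List (List Bool × ℕ) → (List Bool × ℕ) → Option RightVert),
      ∀ rs : List (List Bool × ℕ), rs.Nodup →
        (∀ k, rs.countP (fun r => decide (r.2 = k)) ≤ 2 ^ k) →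
        (∀ pr ∈ rs.zip (respond σ [] rs),
          ∃ p : RightVert, pr.2 = some p ∧ p ∈ unionNbhd N pr.1.1 ∧
            p.1 + 5 ≤ pr.1.2 + c) ∧
        (rs.zip (respond σ [] rs)).Pairwise
          (fun a b => a.1.1 ≠ b.1.1 → a.2 ≠ b.2) := by
  constructor
  · refine ⟨2 * C, fun x => ?_⟩
    have h1 : (unionNbhd N x).card ≤ ∑ k ∈ Finset.range (x.length + 2), (N k x).card := by
      rw [unionNbhd]
      refine le_trans Finset.card_biUnion_le (le_of_eq ?_)
      exact Finset.sum_congr rfl fun k _ => Finset.card_map _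
    have h2 : ∑ k ∈ Finset.range (x.length + 2), (N k x).card ≤
        (x.length + 2) * (C * (x.length + 1)) := by
      refine le_trans (Finset.sum_le_sum fun k _ => hdeg k x) ?_
      rw [Finset.sum_const, Finset.card_range, smul_eq_mul]
    have h3 : (x.length + 2) * (x.length + 1) ≤ 2 * (x.length + 1) ^ 2 := by nlinarith
    have h4 : (x.length + 2) * (C * (x.length + 1)) ≤ 2 * C * (x.length + 1) ^ 2 := by
      calc (x.length + 2) * (C * (x.length + 1))
          = C * ((x.length + 2) * (x.length + 1)) := by ring
        _ ≤ C * (2 * (x.length + 1) ^ 2) := Nat.mul_le_mul_left _ h3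
        _ = 2 * C * (x.length + 1) ^ 2 := by ring
    omega
  · refine ⟨5, Stmt19.strat N, fun rs hnd hcnt => ?_⟩
    have main := Stmt19.main_aux N hexp rs hnd hcnt rs [] rfl
    constructor
    · intro pr hpr
      obtain ⟨p, en, h1, h2, h3, _, _, _⟩ := main pr hpr
      exact ⟨p, h1, h2, by omega⟩
    · apply List.pairwise_of_forall_mem_list
      intro a ha b hb hne hud
      obtain ⟨pa, ena, ha1, _, _, ha4, ha5, ha6⟩ := main a ha
      obtain ⟨pb, enb, hb1, _, _, hb4, hb5, hb6⟩ := main b hb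
      rw [ha1, hb1] at hud
      have hpp : ena.p = enb.p := by
        rw [ha6, hb6]
        exact Option.some.inj hud
      have heq := List.inj_on_of_nodup_map (Stmt19.runState_inv N rs).nodup
        ha4 hb4 hpp
      apply hne
      rw [← ha5, ← hb5, heq]
end
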